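/- arXiv:2312.07005 — 2 statements merged into one kernel-verified Lean document; each statement's English description precedes it below -/
import Mathlib

section
/- Let p > 1 be an integer. If G is a minimally 2-connected simple graph with n ≥ 4 vertices, then e_p(G) ≤ 2·(n-2)^p + (n-2)·2^p, with equality if and only if G is isomorphic to the complete bipartite graph K_{2,n-2}. -/
open SimpleGraph Finset


/-- `G` is `t`-connected: removing fewer than `t` vertices always leaves the
remaining (induced) graph connected. -/
def IsTConnected {V : Type*} (t : ℕ) (G : SimpleGraph V) : Prop :=
  ∀ s : Finset V, s.card < t → (G.induce ((↑s : Set V)ᶜ)).Connected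

/-- `G` is minimally `t`-connected: it is `t`-connected and deleting any edge
yields a graph that is not `t`-connected. -/
def MinimallyTConnected {V : Type*} (t : ℕ) (G : SimpleGraph V) : Prop :=
  IsTConnected t G ∧ ∀ e ∈ G.edgeSet, ¬ IsTConnected t (G.deleteEdges {e})

namespace DPMTC


variable {V : Type*}

/-- Reachability via a walk whose support stays inside `A`. -/
def RW (H : SimpleGraph V) (A : Set V) (a b : V) : Prop :=
  ∃ p : H.Walk a b, ∀ x ∈ p.support, x ∈ A

lemma RW.rfl {H : SimpleGraph V} {A : Set V} {a : V} (ha : a ∈ A) : RW H A a a :=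
  ⟨.nil, by simpa using ha⟩

lemma RW.left_mem {H : SimpleGraph V} {A : Set V} {a b : V} (h : RW H A a b) : a ∈ A := by
  obtain ⟨p, hp⟩ := h; exact hp a p.start_mem_support

lemma RW.right_mem {H : SimpleGraph V} {A : Set V} {a b : V} (h : RW H A a b) : b ∈ A := by
  obtain ⟨p, hp⟩ := h; exact hp b p.end_mem_support

lemma RW.symm {H : SimpleGraph V} {A : Set V} {a b : V} (h : RW H A a b) : RW H A b a := by
  obtain ⟨p, hp⟩ := h
  exact ⟨p.reverse, by intro x hx; rw [Walk.support_reverse, List.mem_reverse] at hx; exact hp x hx⟩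

lemma RW.trans {H : SimpleGraph V} {A : Set V} {a b c : V}
    (h1 : RW H A a b) (h2 : RW H A b c) : RW H A a c := by
  obtain ⟨p, hp⟩ := h1; obtain ⟨q, hq⟩ := h2
  refine ⟨p.append q, ?_⟩
  intro x hx
  rw [Walk.support_append, List.mem_append] at hx
  rcases hx with hx | hx
  · exact hp x hx
  · exact hq x (List.mem_of_mem_tail hx)

lemma RW.of_adj {H : SimpleGraph V} {A : Set V} {a b : V}
    (h : H.Adj a b) (ha : a ∈ A) (hb : b ∈ A) : RW H A a b :=
  ⟨.cons h .nil, by intro x hx; simp at hx; rcases hx with rfl | rfl <;> assumption⟩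

lemma RW.mono {H H' : SimpleGraph V} {A A' : Set V} {a b : V}
    (hH : H ≤ H') (hA : A ⊆ A') (h : RW H A a b) : RW H' A' a b := by
  obtain ⟨p, hp⟩ := h
  refine ⟨p.transfer H' (fun e he => edgeSet_mono hH (p.edges_subset_edgeSet he)), ?_⟩
  rw [Walk.support_transfer]
  exact fun x hx => hA (hp x hx)

lemma induce_adj' {H : SimpleGraph V} {A : Set V} {u v : ↑A}
    (h : (H.induce A).Adj u v) : H.Adj ↑u ↑v := h

lemma induce_adj_of {H : SimpleGraph V} {A : Set V} {u v : ↑A}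
    (h : H.Adj ↑u ↑v) : (H.induce A).Adj u v := h

lemma RW.toInduce {H : SimpleGraph V} {A : Set V} {a b : V} (h : RW H A a b) :
    ∀ (ha : a ∈ A) (hb : b ∈ A), (H.induce A).Reachable ⟨a, ha⟩ ⟨b, hb⟩ := by
  obtain ⟨p, hp⟩ := h
  induction p with
  | nil => intro ha hb; exact Reachable.refl _
  | @cons u v w h q ih =>
    intro ha hb
    have hv : v ∈ A := hp v (by simp)
    have step : (H.induce A).Adj ⟨u, ha⟩ ⟨v, hv⟩ := induce_adj_of h
    exact (step.reachable).trans (ih (fun x hx => hp x (by simp [hx])) hv hb)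

lemma RW.ofInduceWalk {H : SimpleGraph V} {A : Set V} :
    ∀ {x y : ↑A}, (H.induce A).Walk x y → RW H A ↑x ↑y := by
  intro x y p
  induction p with
  | nil => exact RW.rfl (Subtype.prop _)
  | cons h q ih => exact (RW.of_adj (induce_adj' h) (Subtype.prop _) (Subtype.prop _)).trans ih

lemma RW.ofInduce {H : SimpleGraph V} {A : Set V} {x y : ↑A}
    (h : (H.induce A).Reachable x y) : RW H A ↑x ↑y := by
  obtain ⟨p⟩ := h
  exact RW.ofInduceWalk p

lemma connected_induce_iff {H : SimpleGraph V} {A : Set V} :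
    (H.induce A).Connected ↔ A.Nonempty ∧ ∀ a ∈ A, ∀ b ∈ A, RW H A a b := by
  constructor
  · intro hc
    have hne : A.Nonempty := by
      obtain ⟨⟨x, hx⟩⟩ := hc.nonempty
      exact ⟨x, hx⟩
    refine ⟨hne, fun a ha b hb => ?_⟩
    exact RW.ofInduce (hc.preconnected ⟨a, ha⟩ ⟨b, hb⟩)
  · rintro ⟨⟨z, hz⟩, h⟩
    haveI : Nonempty ↑A := ⟨⟨z, hz⟩⟩
    exact ⟨fun x y => (h ↑x x.2 ↑y y.2).toInduce x.2 y.2⟩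

/-- Deleting an edge: either reach the target, or reach an endpoint of the deleted
edge, with a walk avoiding the deleted edge. -/
lemma rw_delete_or {H : SimpleGraph V} {A : Set V} {x y a b : V} (h : RW H A a b) :
    RW (H.deleteEdges {s(x,y)}) A a b ∨ RW (H.deleteEdges {s(x,y)}) A a x ∨
      RW (H.deleteEdges {s(x,y)}) A a y := by
  obtain ⟨p, hp⟩ := h
  induction p with
  | nil => exact Or.inl (RW.rfl (hp _ (by simp)))
  | @cons u v w h q ih =>
    have hu : u ∈ A := hp u (by simp)
    have hv : v ∈ A := hp v (by simp)
    by_cases he : s(u,v) = s(x,y)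
    · rw [Sym2.eq_iff] at he
      rcases he with ⟨rfl, rfl⟩ | ⟨rfl, rfl⟩
      · exact Or.inr (Or.inl (RW.rfl hu))
      · exact Or.inr (Or.inr (RW.rfl hu))
    · have hadj : (H.deleteEdges {s(x,y)}).Adj u v := by
        rw [deleteEdges_adj]; exact ⟨h, by simpa using he⟩
      have hq : ∀ z ∈ q.support, z ∈ A := fun z hz => hp z (by simp [hz])
      rcases ih hq with h' | h' | h'
      · exact Or.inl ((RW.of_adj hadj hu hv).trans h')
      · exact Or.inr (Or.inl ((RW.of_adj hadj hu hv).trans h'))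
      · exact Or.inr (Or.inr ((RW.of_adj hadj hu hv).trans h'))

lemma exists_crossing {H : SimpleGraph V} {S : Finset V} :
    ∀ {a b : V}, H.Walk a b → a ∈ S → b ∉ S → ∃ u v, H.Adj u v ∧ u ∈ S ∧ v ∉ S := by
  intro a b p
  induction p with
  | nil => intro ha hb; exact absurd ha hb
  | @cons u v w h q ih =>
    intro ha hb
    by_cases hv : v ∈ S
    · exact ih hv hb
    · exact ⟨u, v, h, ha, hv⟩

lemma exists_entry {H : SimpleGraph V} {S : Finset V} :
    ∀ {v t : V} (p : H.Walk v t), v ∉ S → t ∈ S →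
    ∃ b, b ∈ S ∧ ∃ q : H.Walk v b, (∀ x ∈ q.support, x ∈ p.support) ∧
      ∀ x ∈ q.support, x ≠ b → x ∉ S := by
  intro v t p
  induction p with
  | nil => intro hv ht; exact absurd ht hv
  | @cons u c w h q ih =>
    intro hv ht
    by_cases hc : c ∈ S
    · refine ⟨c, hc, Walk.cons h .nil, ?_, ?_⟩
      · intro x hx; simp at hx; rcases hx with rfl | rfl <;> simp
      · intro x hx hxc; simp at hx
        rcases hx with rfl | rfl
        · exact hv
        · exact absurd rfl hxc
    · obtain ⟨b, hb, q', hsub, hout⟩ := ih hc ht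
      refine ⟨b, hb, Walk.cons h q', ?_, ?_⟩
      · intro x hx
        rw [Walk.support_cons, List.mem_cons] at hx ⊢
        rcases hx with rfl | hx
        · exact Or.inl rfl
        · exact Or.inr (hsub x hx)
      · intro x hx hxb
        rw [Walk.support_cons, List.mem_cons] at hx
        rcases hx with rfl | hx
        · exact hv
        · exact hout x hx hxb


/-- If some vertex of the deleted edge is outside `A`, walks inside `A` survive
edge deletion. -/
lemma rw_delete_of_avoid {H : SimpleGraph V} {A : Set V} {a b : V} {e : Sym2 V} {x : V}
    (hxe : x ∈ e) (hxA : x ∉ A) (h : RW H A a b) : RW (H.deleteEdges {e}) A a b := by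
  obtain ⟨p, hp⟩ := h
  refine ⟨p.transfer _ (fun e' he' => ?_), by rw [Walk.support_transfer]; exact hp⟩
  rw [edgeSet_deleteEdges]
  refine ⟨p.edges_subset_edgeSet he', ?_⟩
  intro hmem
  rw [Set.mem_singleton_iff] at hmem
  subst hmem
  obtain ⟨y', rfl⟩ := Sym2.mem_iff_exists.mp hxe
  exact hxA (hp x (p.fst_mem_support_of_mem_edges he'))

section Main

variable {n : ℕ} {G : SimpleGraph (Fin n)}

lemma conn_univ (hG : MinimallyTConnected 2 G) (a b : Fin n) : RW G Set.univ a b := by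
  have h := hG.1 ∅ (by simp)
  rw [show ((↑(∅ : Finset (Fin n)) : Set (Fin n)))ᶜ = Set.univ by simp] at h
  exact (connected_induce_iff.1 h).2 a trivial b trivial

lemma conn_avoid (hG : MinimallyTConnected 2 G) (w : Fin n) {a b : Fin n}
    (ha : a ≠ w) (hb : b ≠ w) : RW G {w}ᶜ a b := by
  have h := hG.1 {w} (by simp)
  rw [show ((↑({w} : Finset (Fin n)) : Set (Fin n)))ᶜ = ({w}ᶜ : Set (Fin n)) by simp] at h
  exact (connected_induce_iff.1 h).2 a ha b hb

lemma exists_other (hn : 4 ≤ n) (T : Finset (Fin n)) (hT : T.card ≤ 3) :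
    ∃ u, u ∉ T := by
  by_contra hcon
  push_neg at hcon
  have : (Finset.univ : Finset (Fin n)) ⊆ T := fun x _ => hcon x
  have := Finset.card_le_card this
  simp at this
  omega

lemma degree_ge_two (hG : MinimallyTConnected 2 G) (hn : 4 ≤ n) [DecidableRel G.Adj]
    (v : Fin n) : 2 ≤ G.degree v := by
  by_contra hlt
  push_neg at hlt
  -- v has at most one neighbor
  have hex : ∀ {u : Fin n}, u ≠ v → ∃ c, G.Adj v c := by
    intro u hu
    obtain ⟨p, -⟩ := conn_univ hG v u
    cases p with
    | nil => exact absurd rfl hu.symm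
    | cons h q => exact ⟨_, h⟩
  obtain ⟨u0, hu0⟩ : ∃ u0 : Fin n, u0 ≠ v := by
    obtain ⟨a, b, hab⟩ := Fintype.exists_pair_of_one_lt_card (α := Fin n) (by simp; omega)
    rcases eq_or_ne a v with rfl | h
    · exact ⟨b, fun h' => hab h'.symm⟩
    · exact ⟨a, h⟩
  obtain ⟨c, hc⟩ := hex hu0
  have hdeg1 : G.degree v = 1 := by
    have : 1 ≤ G.degree v := by
      rw [← card_neighborFinset_eq_degree]
      exact Finset.card_pos.2 ⟨c, by rwa [mem_neighborFinset]⟩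
    omega
  have hNv : G.neighborFinset v = {c} := by
    apply Finset.eq_singleton_iff_unique_mem.2
    refine ⟨by rwa [mem_neighborFinset], ?_⟩
    intro x hx
    by_contra hxc
    have : 2 ≤ (G.neighborFinset v).card := by
      have : ({x, c} : Finset (Fin n)) ⊆ G.neighborFinset v := by
        intro z hz; simp at hz; rcases hz with rfl | rfl
        · exact hx
        · rwa [mem_neighborFinset]
      have h2 := Finset.card_le_card this
      rwa [Finset.card_insert_of_notMem (by simpa using hxc), Finset.card_singleton] at h2
    rw [card_neighborFinset_eq_degree] at this; omega
  obtain ⟨u', hu'⟩ := exists_other hn {v, c} (by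
    apply le_trans (Finset.card_insert_le _ _); simp)
  simp only [Finset.mem_insert, Finset.mem_singleton, not_or] at hu'
  obtain ⟨p, hp⟩ := conn_avoid hG c (a := v) (b := u') hc.ne hu'.2
  cases p with
  | nil => exact hu'.1 rfl
  | @cons _ c2 _ h q =>
    have hmem : c2 ∈ G.neighborFinset v := by rwa [mem_neighborFinset]
    rw [hNv, Finset.mem_singleton] at hmem
    exact (hp c2 (by simp)) (by simp [hmem])

lemma exists_witness (hG : MinimallyTConnected 2 G) (hn : 4 ≤ n) {x y : Fin n}
    (hxy : G.Adj x y) :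
    ∃ w, w ≠ x ∧ w ≠ y ∧ ¬ RW (G.deleteEdges {s(x,y)}) {w}ᶜ x y := by
  have h2 := hG.2 s(x,y) ((mem_edgeSet G).2 hxy)
  simp only [IsTConnected, not_forall] at h2
  obtain ⟨s, hs, hnc⟩ := h2
  rcases (show s.card = 0 ∨ s.card = 1 by omega) with h0 | h1
  · -- s = ∅ : G - e is disconnected
    rw [Finset.card_eq_zero] at h0; subst h0
    rw [show ((↑(∅ : Finset (Fin n)) : Set (Fin n)))ᶜ = Set.univ by simp] at hnc
    have hnr : ¬ RW (G.deleteEdges {s(x,y)}) Set.univ x y := by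
      intro hr
      apply hnc
      rw [connected_induce_iff]
      refine ⟨⟨x, trivial⟩, fun a _ b _ => ?_⟩
      have key : ∀ c : Fin n, RW (G.deleteEdges {s(x,y)}) Set.univ c x := by
        intro c
        rcases rw_delete_or (x := x) (y := y) (conn_univ hG c x) with h' | h' | h'
        · exact h'
        · exact h'
        · exact h'.trans hr.symm
      exact (key a).trans (key b).symm
    obtain ⟨w, hw⟩ := exists_other hn {x, y} (le_trans (Finset.card_insert_le _ _) (by simp))
    simp only [Finset.mem_insert, Finset.mem_singleton, not_or] at hw
    exact ⟨w, hw.1, hw.2, fun h => hnr (h.mono le_rfl (Set.subset_univ _))⟩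
  · rw [Finset.card_eq_one] at h1
    obtain ⟨w, rfl⟩ := h1
    rw [show ((↑({w} : Finset (Fin n)) : Set (Fin n)))ᶜ = ({w}ᶜ : Set (Fin n)) by simp] at hnc
    have hwx : w ≠ x := by
      rintro rfl
      apply hnc
      rw [connected_induce_iff]
      refine ⟨⟨y, by simp [hxy.ne']⟩, fun a ha b hb => ?_⟩
      exact rw_delete_of_avoid (Sym2.mem_mk_left w y) (by simp) (conn_avoid hG w ha hb)
    have hwy : w ≠ y := by
      rintro rfl
      apply hnc
      rw [connected_induce_iff]
      refine ⟨⟨x, by simp [hxy.ne]⟩, fun a ha b hb => ?_⟩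
      exact rw_delete_of_avoid (Sym2.mem_mk_right x w) (by simp) (conn_avoid hG w ha hb)
    refine ⟨w, hwx, hwy, fun hr => ?_⟩
    apply hnc
    rw [connected_induce_iff]
    refine ⟨⟨x, by simp [hwx.symm]⟩, fun a ha b hb => ?_⟩
    have key : ∀ c : Fin n, c ∈ ({w}ᶜ : Set (Fin n)) →
        RW (G.deleteEdges {s(x,y)}) {w}ᶜ c x := by
      intro c hc
      rcases rw_delete_or (x := x) (y := y)
        (conn_avoid hG w (a := c) (b := x) hc hwx.symm) with h' | h' | h'
      · exact h'
      · exact h'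
      · exact h'.trans hr.symm
    exact (key a ha).trans (key b hb).symm

end Main


section Main3

variable {n : ℕ} {G : SimpleGraph (Fin n)}

lemma memc {w a : Fin n} (h : a ≠ w) : a ∈ ({w}ᶜ : Set (Fin n)) := by simpa

/-- Transfer a walk in `G - e₁` to `G - e₂` when some vertex of `e₂` avoids the walk. -/
lemma rw_retarget {e₁ e₂ : Sym2 (Fin n)} {B : Set (Fin n)} {a b y : Fin n}
    (q : (G.deleteEdges {e₁}).Walk a b) (hy : y ∈ e₂) (hysupp : y ∉ q.support)
    (hB : ∀ x ∈ q.support, x ∈ B) : RW (G.deleteEdges {e₂}) B a b := by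
  refine ⟨q.transfer _ (fun e' he' => ?_), by rw [Walk.support_transfer]; exact hB⟩
  rw [edgeSet_deleteEdges]
  refine ⟨(edgeSet_deleteEdges {e₁} ▸ q.edges_subset_edgeSet he').1, ?_⟩
  intro hmem
  rw [Set.mem_singleton_iff] at hmem
  subst hmem
  obtain ⟨y2, rfl⟩ := Sym2.mem_iff_exists.mp hy
  exact hysupp (q.fst_mem_support_of_mem_edges he')

lemma tri_witness (hG : MinimallyTConnected 2 G) (hn : 4 ≤ n) {x y z : Fin n}
    (hxy : G.Adj x y) (hyz : G.Adj y z) (hzx : G.Adj z x) :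
    ¬ RW (G.deleteEdges {s(x,y)}) {z}ᶜ x y := by
  obtain ⟨w, hwx, hwy, hw⟩ := exists_witness hG hn hxy
  rcases eq_or_ne w z with rfl | hne
  · exact hw
  · exfalso
    apply hw
    have hxz' : (G.deleteEdges {s(x,y)}).Adj x z := by
      rw [deleteEdges_adj]
      refine ⟨hzx.symm, ?_⟩
      rw [Set.mem_singleton_iff, Sym2.eq_iff]
      have e1 := hxy.ne; have e2 := hyz.ne; have e3 := hzx.ne
      rintro (⟨f1, f2⟩ | ⟨f1, f2⟩) <;> simp_all
    have hzy' : (G.deleteEdges {s(x,y)}).Adj z y := by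
      rw [deleteEdges_adj]
      refine ⟨hyz.symm, ?_⟩
      rw [Set.mem_singleton_iff, Sym2.eq_iff]
      have e1 := hxy.ne; have e2 := hyz.ne; have e3 := hzx.ne
      rintro (⟨f1, f2⟩ | ⟨f1, f2⟩) <;> simp_all
    exact (RW.of_adj hxz' (memc hwx.symm) (memc hne.symm)).trans
      (RW.of_adj hzy' (memc hne.symm) (memc hwy.symm))

lemma tri_nbrs (hG : MinimallyTConnected 2 G) (hn : 4 ≤ n) {x y z : Fin n}
    (hxy : G.Adj x y) (hyz : G.Adj y z) (hzx : G.Adj z x) :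
    ∀ u, G.Adj y u → u = x ∨ u = z := by
  intro u hu
  by_contra hcon
  push_neg at hcon
  obtain ⟨hux, huz⟩ := hcon
  have huy : u ≠ y := hu.ne'
  have T1 : ¬ RW (G.deleteEdges {s(x,y)}) {z}ᶜ x y := tri_witness hG hn hxy hyz hzx
  have T2 : ¬ RW (G.deleteEdges {s(y,z)}) {x}ᶜ y z := tri_witness hG hn hyz hzx hxy
  have T3 : ¬ RW (G.deleteEdges {s(x,z)}) {y}ᶜ x z := by
    rw [Sym2.eq_swap (a := x) (b := z)]
    exact fun h => tri_witness hG hn hzx hxy hyz h.symm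
  -- u is adjacent to y; derive reachability facts
  have Rd1uy : RW (G.deleteEdges {s(x,y)}) {z}ᶜ u y := by
    refine RW.of_adj ?_ (memc huz) (memc hyz.ne)
    rw [deleteEdges_adj]
    refine ⟨hu.symm, ?_⟩
    rw [Set.mem_singleton_iff, Sym2.eq_iff]
    have e1 := hxy.ne; have e2 := hyz.ne; have e3 := hzx.ne
    rintro (⟨f1, f2⟩ | ⟨f1, f2⟩) <;> simp_all
  have nRd1ux : ¬ RW (G.deleteEdges {s(x,y)}) {z}ᶜ u x :=
    fun h => T1 (h.symm.trans Rd1uy)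
  have Rd2uy : RW (G.deleteEdges {s(y,z)}) {x}ᶜ u y := by
    refine RW.of_adj ?_ (memc hux) (memc hxy.ne')
    rw [deleteEdges_adj]
    refine ⟨hu.symm, ?_⟩
    rw [Set.mem_singleton_iff, Sym2.eq_iff]
    have e1 := hxy.ne; have e2 := hyz.ne; have e3 := hzx.ne
    rintro (⟨f1, f2⟩ | ⟨f1, f2⟩) <;> simp_all
  have nRd2uz : ¬ RW (G.deleteEdges {s(y,z)}) {x}ᶜ u z :=
    fun h => T2 (Rd2uy.symm.trans h)
  have hc : RW G {y}ᶜ u z := conn_avoid hG y huy hyz.ne'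
  rcases rw_delete_or (x := x) (y := z) hc with h' | h' | h'
  · -- walk u → z in G - xz avoiding y
    obtain ⟨q, hq⟩ := h'
    by_cases hxs : x ∈ q.support
    · exact T3 ⟨q.dropUntil x hxs, fun v hv => hq v (q.support_dropUntil_subset hxs hv)⟩
    · exact nRd2uz (rw_retarget q (Sym2.mem_mk_left y z) (fun h => (hq y h) rfl)
        (fun v hv => memc (fun h => hxs (h ▸ hv))))
  · -- walk u → x in G - xz avoiding y
    obtain ⟨q, hq⟩ := h'
    by_cases hzs : z ∈ q.support
    · refine T3 (RW.symm ⟨q.dropUntil z hzs, fun v hv => hq v (q.support_dropUntil_subset hzs hv)⟩)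
    · refine nRd1ux (rw_retarget q (Sym2.mem_mk_right x y) (fun h => (hq y h) rfl)
        (fun v hv => memc (fun h => hzs (h ▸ hv))))
  · -- walk u → z in G - xz avoiding y (same as first case)
    obtain ⟨q, hq⟩ := h'
    by_cases hxs : x ∈ q.support
    · exact T3 ⟨q.dropUntil x hxs, fun v hv => hq v (q.support_dropUntil_subset hxs hv)⟩
    · exact nRd2uz (rw_retarget q (Sym2.mem_mk_left y z) (fun h => (hq y h) rfl)
        (fun v hv => memc (fun h => hxs (h ▸ hv))))

lemma triangle_free (hG : MinimallyTConnected 2 G) (hn : 4 ≤ n) {x y z : Fin n}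
    (hxy : G.Adj x y) (hyz : G.Adj y z) (hzx : G.Adj z x) : False := by
  have NBy := tri_nbrs hG hn hxy hyz hzx
  have NBx := tri_nbrs hG hn hzx hxy hyz
  have NBz := tri_nbrs hG hn hyz hzx hxy
  obtain ⟨v, hv⟩ := exists_other hn {x, y, z} (by
    refine le_trans (Finset.card_insert_le _ _) ?_
    refine le_trans (Nat.add_le_add_right (Finset.card_insert_le _ _) 1) ?_
    simp)
  obtain ⟨p, -⟩ := conn_univ hG x v
  obtain ⟨u1, v1, hadj, hu1, hv1⟩ := exists_crossing (S := {x, y, z}) p (by simp) hv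
  simp only [Finset.mem_insert, Finset.mem_singleton] at hu1
  rcases hu1 with rfl | rfl | rfl
  · rcases NBx v1 hadj with rfl | rfl <;> simp at hv1
  · rcases NBy v1 hadj with rfl | rfl <;> simp at hv1
  · rcases NBz v1 hadj with rfl | rfl <;> simp at hv1

lemma degree_le (hG : MinimallyTConnected 2 G) (hn : 4 ≤ n) [DecidableRel G.Adj]
    (v : Fin n) : G.degree v ≤ n - 2 := by
  by_contra hlt
  push_neg at hlt
  have hub : G.degree v < n := by
    have := G.degree_lt_card_verts v
    simpa using this
  have hdeg : G.degree v = n - 1 := by omega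
  have hNv : G.neighborFinset v = Finset.univ.erase v := by
    apply Finset.eq_of_subset_of_card_le
    · intro z hz
      rw [mem_neighborFinset] at hz
      exact Finset.mem_erase.2 ⟨hz.ne', Finset.mem_univ _⟩
    · rw [Finset.card_erase_of_mem (Finset.mem_univ _)]
      simp [← card_neighborFinset_eq_degree, hdeg] at *
      omega
  have hadjall : ∀ u : Fin n, u ≠ v → G.Adj v u := by
    intro u hu
    have : u ∈ G.neighborFinset v := by
      rw [hNv]; exact Finset.mem_erase.2 ⟨hu, Finset.mem_univ _⟩
    rwa [mem_neighborFinset] at this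
  obtain ⟨u, hu⟩ : ∃ u : Fin n, u ≠ v := by
    obtain ⟨a, b, hab⟩ := Fintype.exists_pair_of_one_lt_card (α := Fin n) (by simp; omega)
    rcases eq_or_ne a v with rfl | h
    · exact ⟨b, fun h' => hab h'.symm⟩
    · exact ⟨a, h⟩
  -- u has a neighbor z ≠ v
  have h2 : 2 ≤ G.degree u := degree_ge_two hG hn u
  obtain ⟨z, hz⟩ : ∃ z, z ∈ G.neighborFinset u \ {v} := by
    apply Finset.card_pos.1
    have := Finset.card_le_card_sdiff_add_card (s := G.neighborFinset u) (t := {v})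
    have hc : ({v} : Finset (Fin n)).card = 1 := Finset.card_singleton v
    rw [card_neighborFinset_eq_degree] at *
    omega
  rw [Finset.mem_sdiff, mem_neighborFinset, Finset.mem_singleton] at hz
  exact triangle_free hG hn (hadjall u hu) hz.1 (hadjall z (hz.2)).symm

end Main3

section Ear

variable {V : Type*}

lemma end_not_mem_takeUntil [DecidableEq V] {H : SimpleGraph V} {s t : V} (q : H.Walk s t)
    (hq : q.support.Nodup) {a : V} (ha : a ∈ q.support) (hat : a ≠ t) :
    t ∉ (q.takeUntil a ha).support := by
  intro hmem
  have hsupp := congrArg Walk.support (q.take_spec ha)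
  rw [Walk.support_append] at hsupp
  rw [← hsupp] at hq
  have hdis := (List.nodup_append.mp hq).2.2
  have ht2 : t ∈ (q.dropUntil a ha).support.tail := by
    have h3 : t ∈ (q.dropUntil a ha).support := Walk.end_mem_support _
    rw [Walk.support_eq_cons] at h3
    rcases List.mem_cons.mp h3 with h | h
    · exact absurd h.symm hat
    · exact h
  exact hdis t hmem t ht2 rfl

lemma not_mem_take_or_drop [DecidableEq V] {H : SimpleGraph V} {u t : V} (P : H.Walk u t)
    (hP : P.support.Nodup) {x w : V} (hx : x ∈ P.support) (hw : w ≠ x) :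
    w ∉ (P.takeUntil x hx).support ∨ w ∉ (P.dropUntil x hx).support := by
  by_contra hcon
  push_neg at hcon
  obtain ⟨h1, h2⟩ := hcon
  have hsupp := congrArg Walk.support (P.take_spec hx)
  rw [Walk.support_append] at hsupp
  rw [← hsupp] at hP
  have hdis := (List.nodup_append.mp hP).2.2
  have hw2 : w ∈ (P.dropUntil x hx).support.tail := by
    rw [Walk.support_eq_cons] at h2
    rcases List.mem_cons.mp h2 with h | h
    · exact absurd h hw
    · exact h
  exact hdis w h1 w hw2 rfl

lemma rw_of_path_support [DecidableEq V] {H : SimpleGraph V} {s t : V} (q : H.Walk s t)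
    (hq : q.support.Nodup) {a b : V} (ha : a ∈ q.support) (hb : b ∈ q.support)
    (hat : a ≠ t) (hbt : b ≠ t) : RW H {x | x ∈ q.support ∧ x ≠ t} a b := by
  have key : ∀ c (hc : c ∈ q.support), c ≠ t → RW H {x | x ∈ q.support ∧ x ≠ t} s c := by
    intro c hc hct
    refine ⟨q.takeUntil c hc, fun x hx => ⟨q.support_takeUntil_subset hc hx, ?_⟩⟩
    exact fun hxe => (end_not_mem_takeUntil q hq hc hct) (hxe ▸ hx)
  exact (key a ha hat).symm.trans (key b hb hbt)

lemma closed_mem_tail {H : SimpleGraph V} {v x : V} (c : H.Walk v v) (h0 : 0 < c.length) :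
    x ∈ c.support ↔ x ∈ c.support.tail := by
  cases c with
  | nil => simp at h0
  | cons h q =>
    rw [Walk.support_cons]
    simp only [List.tail_cons]
    constructor
    · intro hx
      rcases List.mem_cons.mp hx with rfl | hx
      · exact Walk.end_mem_support q
      · exact hx
    · intro hx
      exact List.mem_cons_of_mem _ hx

end Ear

section Ear2

variable {n : ℕ} {G : SimpleGraph (Fin n)}

/-- A 2-connected "partial skeleton": subgraph `H` supported on `S` with the right
edge count and 2-connectivity within `S`. -/
def GoodPair (G H : SimpleGraph (Fin n)) (S : Finset (Fin n)) : Prop :=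
  H ≤ G ∧ 4 ≤ S.card ∧ H.edgeSet.ncard + 4 ≤ 2 * S.card ∧
  ∀ (w a b : Fin n), a ∈ S → b ∈ S → a ≠ w → b ≠ w → RW H ((↑S : Set (Fin n)) \ {w}) a b

lemma G_connected (hG : MinimallyTConnected 2 G) (hn : 4 ≤ n) : G.Connected := by
  haveI : Nonempty (Fin n) := ⟨⟨0, by omega⟩⟩
  exact ⟨fun a b => ⟨(conn_univ hG a b).choose⟩⟩

lemma no_three_cycle (hG : MinimallyTConnected 2 G) (hn : 4 ≤ n) {v : Fin n}
    (c : G.Walk v v) (hc : c.IsCycle) : c.length ≠ 3 := by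
  intro h3
  cases c with
  | nil => simp at h3
  | cons h1 q1 =>
    cases q1 with
    | nil => simp at h3
    | cons h2 q2 =>
      cases q2 with
      | nil => simp at h3
      | cons h3' q3 =>
        have hlen : q3.length = 0 := by
          simp only [Walk.length_cons] at h3
          omega
        have := Walk.eq_of_length_eq_zero hlen
        subst this
        exact triangle_free hG hn h1 h2 h3'

lemma exists_cycle4 (hG : MinimallyTConnected 2 G) (hn : 4 ≤ n) [DecidableRel G.Adj] :
    ∃ (v : Fin n) (c : G.Walk v v), c.IsCycle ∧ 4 ≤ c.length := by
  have hcyc : ∃ (v : Fin n) (c : G.Walk v v), c.IsCycle := by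
    by_contra hac
    push_neg at hac
    have ht : G.IsTree := ⟨G_connected hG hn, fun v c => hac v c⟩
    have hcard := ht.card_edgeFinset
    have hsum := G.sum_degrees_eq_twice_card_edges
    have hlow : ∀ v ∈ (Finset.univ : Finset (Fin n)), 2 ≤ G.degree v :=
      fun v _ => degree_ge_two hG hn v
    have := Finset.sum_le_sum hlow
    simp only [Finset.sum_const, Finset.card_univ, Fintype.card_fin, smul_eq_mul] at this
    rw [hsum] at this
    rw [Fintype.card_fin] at hcard
    omega
  obtain ⟨v, c, hc⟩ := hcyc
  refine ⟨v, c, hc, ?_⟩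
  have h3 := hc.three_le_length
  have hne := no_three_cycle hG hn c hc
  omega

lemma base_good (hG : MinimallyTConnected 2 G) (hn : 4 ≤ n) [DecidableRel G.Adj] :
    ∃ S H, GoodPair G H S := by
  obtain ⟨v, c, hc, hlen⟩ := exists_cycle4 hG hn
  have h0 : 0 < c.length := by omega
  set S : Finset (Fin n) := c.support.toFinset with hS
  set H : SimpleGraph (Fin n) := SimpleGraph.fromEdgeSet {e | e ∈ c.edges} with hH
  have hHG : H ≤ G := by
    intro a b hab
    rw [hH, fromEdgeSet_adj] at hab
    exact (mem_edgeSet G).1 (c.edges_subset_edgeSet hab.1)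
  have hmemS : ∀ x, x ∈ S ↔ x ∈ c.support := by
    intro x; rw [hS, List.mem_toFinset]
  have hStail : S = c.support.tail.toFinset := by
    ext x
    rw [hmemS, List.mem_toFinset]
    exact closed_mem_tail c h0
  have hcardS : S.card = c.length := by
    rw [hStail, List.toFinset_card_of_nodup hc.support_nodup, List.length_tail,
      Walk.length_support]
    omega
  have hedges : H.edgeSet = {e | e ∈ c.edges} := by
    rw [hH, edgeSet_fromEdgeSet]
    ext e
    simp only [Set.mem_diff, Set.mem_setOf_eq, Set.mem_singleton_iff]
    constructor
    · exact fun h => h.1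
    · intro he
      exact ⟨he, fun hdiag => (G.not_isDiag_of_mem_edgeSet (c.edges_subset_edgeSet he)) hdiag⟩
  have hedgecard : H.edgeSet.ncard = c.length := by
    rw [hedges, show {e | e ∈ c.edges} = (↑c.edges.toFinset : Set (Sym2 (Fin n))) by
      ext e; simp]
    rw [Set.ncard_coe_finset, List.toFinset_card_of_nodup hc.edges_nodup,
      Walk.length_edges]
  refine ⟨S, H, hHG, by omega, by omega, ?_⟩
  intro w a b ha hb haw hbw
  have ha' : a ∈ c.support := (hmemS a).1 ha
  have hb' : b ∈ c.support := (hmemS b).1 hb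
  by_cases hwS : w ∈ c.support
  · -- rotate at w
    have hc' := hc.rotate hwS
    obtain ⟨w2, hadj, q, hq⟩ := Walk.not_nil_iff.mp hc'.not_nil
    have hqsupp : q.support = (c.rotate _ hwS).support.tail := by
      rw [hq, Walk.support_cons, List.tail_cons]
    have hqnodup : q.support.Nodup := by
      rw [hqsupp]; exact hc'.support_nodup
    have hmemq : ∀ x, x ∈ c.support.tail → x ∈ q.support := by
      intro x hx
      rw [hqsupp]
      exact (c.support_rotate _ hwS).mem_iff.2 hx
    have haq : a ∈ q.support := hmemq a ((closed_mem_tail c h0).1 ha')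
    have hbq : b ∈ q.support := hmemq b ((closed_mem_tail c h0).1 hb')
    -- transfer q to H
    have hqe : ∀ e ∈ q.edges, e ∈ H.edgeSet := by
      intro e he
      rw [hedges]
      have : e ∈ (c.rotate _ hwS).edges := by
        rw [hq, Walk.edges_cons]
        exact List.mem_cons_of_mem _ he
      exact (c.rotate_edges _ hwS).mem_iff.1 this
    have hsupp_t : (q.transfer H hqe).support = q.support := Walk.support_transfer _ _
    have hres := rw_of_path_support (q.transfer H hqe)
      (by rw [hsupp_t]; exact hqnodup) (a := a) (b := b)
      (by rw [hsupp_t]; exact haq) (by rw [hsupp_t]; exact hbq) haw hbw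
    refine hres.mono le_rfl ?_
    rintro x ⟨hx1, hx2⟩
    rw [hsupp_t] at hx1
    refine ⟨?_, hx2⟩
    rw [Finset.mem_coe, hmemS]
    rw [hqsupp] at hx1
    exact List.mem_of_mem_tail ((c.support_rotate _ hwS).mem_iff.1 hx1)
  · -- w outside the cycle: go around the cycle
    have hc'' := hc.rotate ha'
    have hbmem : b ∈ (c.rotate _ ha').support := by
      rcases eq_or_ne b a with rfl | hba
      · exact Walk.start_mem_support _
      · have : b ∈ c.support.tail := (closed_mem_tail c h0).1 hb'
        have h2 : b ∈ (c.rotate _ ha').support.tail := (c.support_rotate _ ha').mem_iff.2 this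
        exact List.mem_of_mem_tail h2
    have hke : ∀ e ∈ ((c.rotate _ ha').takeUntil b hbmem).edges, e ∈ H.edgeSet := by
      intro e he
      rw [hedges]
      exact (c.rotate_edges _ ha').mem_iff.1 ((c.rotate _ ha').edges_takeUntil_subset hbmem he)
    refine ⟨((c.rotate _ ha').takeUntil b hbmem).transfer H hke, ?_⟩
    intro x hx
    rw [Walk.support_transfer] at hx
    have hx1 : x ∈ (c.rotate _ ha').support :=
      (c.rotate _ ha').support_takeUntil_subset hbmem hx
    have hx2 : x ∈ c.support := by
      rcases eq_or_ne x a with rfl | hxa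
      · exact ha'
      · have : x ∈ (c.rotate _ ha').support.tail := by
          rw [Walk.support_eq_cons] at hx1
          rcases List.mem_cons.mp hx1 with h | h
          · exact absurd h hxa
          · exact h
        exact List.mem_of_mem_tail ((c.support_rotate _ ha').mem_iff.1 this)
    refine ⟨by rw [Finset.mem_coe, hmemS]; exact hx2, ?_⟩
    intro hxw
    rw [Set.mem_singleton_iff] at hxw
    subst hxw
    exact hwS hx2

end Ear2

section Ear3

variable {n : ℕ} {G : SimpleGraph (Fin n)}

lemma ear_step (hG : MinimallyTConnected 2 G) (hn : 4 ≤ n) {S : Finset (Fin n)}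
    {H : SimpleGraph (Fin n)} (hgp : GoodPair G H S) (hne : S ≠ Finset.univ) :
    ∃ S' H', GoodPair G H' S' ∧ S.card < S'.card := by
  classical
  obtain ⟨hHG, hcard4, hecount, hQ⟩ := hgp
  -- a vertex outside S
  obtain ⟨t0, ht0⟩ : ∃ t0, t0 ∉ S := by
    by_contra hcon
    push_neg at hcon
    exact hne (Finset.eq_univ_iff_forall.2 hcon)
  obtain ⟨s0, hs0⟩ : ∃ s0, s0 ∈ S := Finset.card_pos.1 (by omega)
  obtain ⟨p, -⟩ := conn_univ hG s0 t0
  obtain ⟨u, v, huv, huS, hvS⟩ := exists_crossing p hs0 ht0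
  obtain ⟨s', hs'S, hs'u⟩ := Finset.exists_mem_ne (s := S) (by omega) u
  have hvu : v ≠ u := fun h => hvS (h ▸ huS)
  obtain ⟨p1, hp1⟩ := conn_avoid hG u hvu hs'u
  set p2 := p1.bypass with hp2def
  have hp2path : p2.IsPath := Walk.bypass_isPath p1
  have hp2u : ∀ x ∈ p2.support, x ≠ u := by
    intro x hx
    have := hp1 x (Walk.support_bypass_subset p1 hx)
    simpa using this
  obtain ⟨b, hbS, q0, hq0sub, hq0out⟩ := exists_entry p2 hvS hs'S
  set q := q0.bypass with hqdef
  have hqpath : q.IsPath := Walk.bypass_isPath q0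
  have hqsub : ∀ x ∈ q.support, x ∈ p2.support :=
    fun x hx => hq0sub x (Walk.support_bypass_subset q0 hx)
  have hqout : ∀ x ∈ q.support, x ≠ b → x ∉ S :=
    fun x hx => hq0out x (Walk.support_bypass_subset q0 hx)
  have hqu : ∀ x ∈ q.support, x ≠ u := fun x hx => hp2u x (hqsub x hx)
  have hub : u ≠ b := by
    intro h
    exact hqu b (Walk.end_mem_support q) h.symm
  have hvb : v ≠ b := fun h => hvS (h ▸ hbS)
  -- the ear path
  set PG : G.Walk u b := Walk.cons huv q with hPGdef
  have hPGsupp : PG.support = u :: q.support := Walk.support_cons _ _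
  have hPGnodup : PG.support.Nodup := by
    rw [hPGsupp, List.nodup_cons]
    exact ⟨fun h => hqu u h rfl, hqpath.support_nodup⟩
  set NEW : Finset (Fin n) := q.support.toFinset.erase b with hNEWdef
  have hNEWmem : ∀ x, x ∈ NEW ↔ x ∈ q.support ∧ x ≠ b := by
    intro x
    rw [hNEWdef, Finset.mem_erase, List.mem_toFinset]
    tauto
  have hNEWnotS : ∀ x ∈ NEW, x ∉ S := by
    intro x hx
    rw [hNEWmem] at hx
    exact hqout x hx.1 hx.2
  have hdisj : Disjoint S NEW := by
    rw [Finset.disjoint_right]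
    exact fun {a} haN => hNEWnotS a haN
  have hqlen : 1 ≤ q.length := by
    rcases Nat.eq_zero_or_pos q.length with h0 | h1
    · exact absurd (Walk.eq_of_length_eq_zero h0) hvb
    · exact h1
  have hNEWcard : NEW.card = q.length := by
    rw [hNEWdef, Finset.card_erase_of_mem (List.mem_toFinset.2 (Walk.end_mem_support q)),
      List.toFinset_card_of_nodup hqpath.support_nodup, Walk.length_support]
    omega
  set S' := S ∪ NEW with hS'def
  have hcardS' : S'.card = S.card + q.length := by
    rw [hS'def, Finset.card_union_of_disjoint hdisj, hNEWcard]
  set H' := H ⊔ SimpleGraph.fromEdgeSet {e | e ∈ PG.edges} with hH'def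
  have hH'G : H' ≤ G := by
    rw [hH'def, sup_le_iff]
    refine ⟨hHG, ?_⟩
    intro x y hxy
    rw [fromEdgeSet_adj] at hxy
    exact (mem_edgeSet G).1 (PG.edges_subset_edgeSet hxy.1)
  have hH'edges : H'.edgeSet = H.edgeSet ∪ ({e | e ∈ PG.edges} \ {e | e.IsDiag}) := by
    rw [hH'def, edgeSet_sup, edgeSet_fromEdgeSet]
    rfl
  have hPGedges_mem : ∀ e ∈ PG.edges, e ∈ H'.edgeSet := by
    intro e he
    rw [hH'edges]
    exact Or.inr ⟨he, fun hdiag => G.not_isDiag_of_mem_edgeSet (PG.edges_subset_edgeSet he) hdiag⟩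
  have hecount' : H'.edgeSet.ncard + 4 ≤ 2 * S'.card := by
    have h1 : H'.edgeSet.ncard ≤ H.edgeSet.ncard + (q.length + 1) := by
      rw [hH'edges]
      refine le_trans (Set.ncard_union_le _ _) ?_
      have h2 : ({e | e ∈ PG.edges} \ {e | e.IsDiag}).ncard ≤ q.length + 1 := by
        have hsub : ({e | e ∈ PG.edges} \ {e | e.IsDiag}) ⊆ ↑PG.edges.toFinset := by
          intro e he
          rw [Finset.mem_coe, List.mem_toFinset]
          exact he.1
        refine le_trans (Set.ncard_le_ncard hsub (Finset.finite_toSet _)) ?_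
        rw [Set.ncard_coe_finset]
        refine le_trans (List.toFinset_card_le _) ?_
        rw [Walk.length_edges, hPGdef, Walk.length_cons]
      omega
    rw [hcardS']
    omega
  refine ⟨S', H', ⟨hH'G, by rw [hcardS']; omega, hecount', ?_⟩, by rw [hcardS']; omega⟩
  -- 2-connectivity within S'
  intro w a1 b1 ha1 hb1 haw hbw
  set P := PG.transfer H' hPGedges_mem with hPdef
  have hPsupp : P.support = PG.support := Walk.support_transfer _ _
  have hPsubS' : ∀ x ∈ P.support, x ∈ S' := by
    intro x hx
    rw [hPsupp, hPGsupp, List.mem_cons] at hx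
    rcases hx with rfl | hx
    · exact Finset.mem_union_left _ huS
    · rcases eq_or_ne x b with rfl | hxb
      · exact Finset.mem_union_left _ hbS
      · exact Finset.mem_union_right _ ((hNEWmem x).2 ⟨hx, hxb⟩)
  have CONNSEG : ∀ x, x ∈ P.support → x ≠ w →
      ∃ y, y ∈ S ∧ y ≠ w ∧ RW H' ((↑S' : Set (Fin n)) \ {w}) x y := by
    intro x hx hxw
    rcases not_mem_take_or_drop P (by rw [hPsupp]; exact hPGnodup) hx (Ne.symm hxw) with h | h
    · -- use the start u
      have huw : u ≠ w := by
        rintro rfl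
        exact h (Walk.start_mem_support _)
      refine ⟨u, huS, huw, RW.symm ⟨P.takeUntil x hx, ?_⟩⟩
      intro z hz
      refine ⟨Finset.mem_coe.2 (hPsubS' z (P.support_takeUntil_subset hx hz)), ?_⟩
      intro hzw
      rw [Set.mem_singleton_iff] at hzw
      exact h (hzw ▸ hz)
    · have hbw' : b ≠ w := by
        rintro rfl
        exact h (Walk.end_mem_support _)
      refine ⟨b, hbS, hbw', ⟨P.dropUntil x hx, ?_⟩⟩
      intro z hz
      refine ⟨Finset.mem_coe.2 (hPsubS' z (P.support_dropUntil_subset hx hz)), ?_⟩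
      intro hzw
      rw [Set.mem_singleton_iff] at hzw
      exact h (hzw ▸ hz)
  have GET : ∀ x, x ∈ S' → x ≠ w →
      ∃ y, y ∈ S ∧ y ≠ w ∧ RW H' ((↑S' : Set (Fin n)) \ {w}) x y := by
    intro x hx hxw
    by_cases hxS : x ∈ S
    · exact ⟨x, hxS, hxw, RW.rfl ⟨Finset.mem_coe.2 hx, by simpa using hxw⟩⟩
    · have hxNEW : x ∈ NEW := by
        rcases Finset.mem_union.1 hx with h | h
        · exact absurd h hxS
        · exact h
      have : x ∈ P.support := by
        rw [hPsupp, hPGsupp, List.mem_cons]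
        exact Or.inr ((hNEWmem x).1 hxNEW).1
      exact CONNSEG x this hxw
  obtain ⟨ya, hyaS, hyaw, hra⟩ := GET a1 ha1 haw
  obtain ⟨yb, hybS, hybw, hrb⟩ := GET b1 hb1 hbw
  have hmid : RW H' ((↑S' : Set (Fin n)) \ {w}) ya yb := by
    refine (hQ w ya yb hyaS hybS hyaw hybw).mono le_sup_left ?_
    intro z hz
    exact ⟨Finset.mem_coe.2 (Finset.mem_union_left _ (Finset.mem_coe.1 hz.1)), hz.2⟩
  exact hra.trans (hmid.trans hrb.symm)

end Ear3

section Final1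

variable {n : ℕ} {G : SimpleGraph (Fin n)}

lemma spanning_good (hG : MinimallyTConnected 2 G) (hn : 4 ≤ n) [DecidableRel G.Adj] :
    ∃ H, GoodPair G H Finset.univ := by
  obtain ⟨S, H, hgp⟩ := base_good hG hn
  suffices key : ∀ (k : ℕ) (S : Finset (Fin n)) (H : SimpleGraph (Fin n)),
      GoodPair G H S → n ≤ S.card + k → ∃ H', GoodPair G H' Finset.univ by
    exact key n S H hgp (by omega)
  intro k
  induction k with
  | zero =>
    intro S H hgp hle
    have hcard : S.card = n := by
      have := Finset.card_le_univ S
      simp only [Finset.card_univ, Fintype.card_fin] at this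
      omega
    have : S = Finset.univ := Finset.eq_univ_of_card S (by simpa using hcard)
    exact ⟨H, this ▸ hgp⟩
  | succ k ih =>
    intro S H hgp hle
    by_cases hSu : S = Finset.univ
    · exact ⟨H, hSu ▸ hgp⟩
    · obtain ⟨S', H', hgp', hlt⟩ := ear_step hG hn hgp hSu
      exact ih S' H' hgp' (by omega)

lemma eq_spanning (hG : MinimallyTConnected 2 G) (hn : 4 ≤ n) {H : SimpleGraph (Fin n)}
    (hgp : GoodPair G H Finset.univ) : G = H := by
  obtain ⟨hHG, -, hcount, hQ⟩ := hgp
  refine le_antisymm ?_ hHG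
  by_contra hcon
  obtain ⟨x, y, hxy, hnxy⟩ : ∃ x y, G.Adj x y ∧ ¬ H.Adj x y := by
    by_contra h
    push_neg at h
    exact hcon (fun x y hxy => h x y hxy)
  have hHle : H ≤ G.deleteEdges {s(x,y)} := by
    intro a b hab
    rw [deleteEdges_adj]
    refine ⟨hHG hab, ?_⟩
    rw [Set.mem_singleton_iff, Sym2.eq_iff]
    rintro (⟨rfl, rfl⟩ | ⟨rfl, rfl⟩)
    · exact hnxy hab
    · exact hnxy hab.symm
  apply hG.2 s(x,y) ((mem_edgeSet G).2 hxy)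
  intro s hs
  rw [connected_induce_iff]
  have hsmall : s.card ≤ 3 := by omega
  constructor
  · obtain ⟨z, hz⟩ := exists_other hn s hsmall
    exact ⟨z, by simpa using hz⟩
  · intro a ha b hb
    rcases (show s.card = 0 ∨ s.card = 1 by omega) with h0 | h1
    · rw [Finset.card_eq_zero] at h0
      subst h0
      obtain ⟨w, hw⟩ := exists_other hn {a, b}
        (le_trans (Finset.card_insert_le _ _) (by simp))
      simp only [Finset.mem_insert, Finset.mem_singleton, not_or] at hw
      refine (hQ w a b (Finset.mem_univ _) (Finset.mem_univ _) (Ne.symm hw.1) (Ne.symm hw.2)).mono hHle ?_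
      intro z hz
      simp
    · rw [Finset.card_eq_one] at h1
      obtain ⟨w, rfl⟩ := h1
      have haw : a ≠ w := by simpa using ha
      have hbw : b ≠ w := by simpa using hb
      refine (hQ w a b (Finset.mem_univ _) (Finset.mem_univ _) haw hbw).mono hHle ?_
      intro z hz
      have := hz.2
      simp only [Set.mem_singleton_iff] at this
      simpa using this

lemma sum_deg_bound (hG : MinimallyTConnected 2 G) (hn : 4 ≤ n) [DecidableRel G.Adj] :
    (∑ v : Fin n, G.degree v) + 8 ≤ 4 * n := by
  obtain ⟨H, hgp⟩ := spanning_good hG hn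
  have hGH := eq_spanning hG hn hgp
  have hcount := hgp.2.2.1
  have hsum := G.sum_degrees_eq_twice_card_edges
  have hfin : G.edgeFinset.card = G.edgeSet.ncard := by
    rw [← Set.ncard_coe_finset, SimpleGraph.coe_edgeFinset]
  rw [← hGH] at hcount
  simp only [Finset.card_univ, Fintype.card_fin] at hcount
  omega

end Final1

section Convex

lemma pointwise_cvx (p : ℕ) {d c : ℝ} (h2 : 2 ≤ d) (hdc : d ≤ c) :
    (c - 2) * d ^ p ≤ (c - d) * 2 ^ p + (d - 2) * c ^ p := by
  rcases eq_or_lt_of_le (le_trans h2 hdc) with heq | hlt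
  · have hc : c = 2 := heq.symm
    have hd2 : d = 2 := le_antisymm (hc ▸ hdc) h2
    subst hc; subst hd2
    norm_num
  · have hc2 : (0:ℝ) < c - 2 := by linarith
    set a := (c - d) / (c - 2) with hadef
    set b := (d - 2) / (c - 2) with hbdef
    have ha : 0 ≤ a := div_nonneg (by linarith) hc2.le
    have hb : 0 ≤ b := div_nonneg (by linarith) hc2.le
    have hab : a + b = 1 := by
      rw [hadef, hbdef]
      field_simp
      try ring
    have hcomb : a * 2 + b * c = d := by
      rw [hadef, hbdef]
      field_simp
      try ring
    have hcv := (convexOn_pow (𝕜 := ℝ) p).2 (Set.mem_Ici.2 (by norm_num : (0:ℝ) ≤ 2))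
      (Set.mem_Ici.2 (by linarith : (0:ℝ) ≤ c)) ha hb hab
    simp only [smul_eq_mul] at hcv
    rw [hcomb] at hcv
    have hmul := mul_le_mul_of_nonneg_left hcv hc2.le
    have hexp : (c - 2) * (a * 2 ^ p + b * c ^ p) = (c - d) * 2 ^ p + (d - 2) * c ^ p := by
      rw [hadef, hbdef]
      field_simp
      try ring
    linarith [hmul, hexp.le, hexp.ge]

lemma pointwise_cvx_strict {p : ℕ} (hp : 2 ≤ p) {d c : ℝ} (h2 : 2 < d) (hdc : d < c) :
    (c - 2) * d ^ p < (c - d) * 2 ^ p + (d - 2) * c ^ p := by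
  have hc2 : (0:ℝ) < c - 2 := by linarith
  set a := (c - d) / (c - 2) with hadef
  set b := (d - 2) / (c - 2) with hbdef
  have ha : 0 < a := div_pos (by linarith) hc2
  have hb : 0 < b := div_pos (by linarith) hc2
  have hab : a + b = 1 := by
    rw [hadef, hbdef]
    field_simp
    try ring
  have hcomb : a * 2 + b * c = d := by
    rw [hadef, hbdef]
    field_simp
    try ring
  have hcv := (strictConvexOn_pow hp).2 (Set.mem_Ici.2 (by norm_num : (0:ℝ) ≤ 2))
    (Set.mem_Ici.2 (by linarith : (0:ℝ) ≤ c)) (by linarith : (2:ℝ) ≠ c) ha hb hab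
  simp only [smul_eq_mul] at hcv
  rw [hcomb] at hcv
  have hmul := (mul_lt_mul_iff_right₀ hc2).2 hcv
  have hexp : (c - 2) * (a * 2 ^ p + b * c ^ p) = (c - d) * 2 ^ p + (d - 2) * c ^ p := by
    rw [hadef, hbdef]
    field_simp
    try ring
  linarith [hmul, hexp.le, hexp.ge]

variable {n : ℕ} {G : SimpleGraph (Fin n)}

lemma sum_pow_analysis (hG : MinimallyTConnected 2 G) (hn5 : 5 ≤ n) (p : ℕ) (hp : 1 < p)
    [DecidableRel G.Adj] :
    (∑ v : Fin n, G.degree v ^ p ≤ 2 * (n-2)^p + (n-2) * 2^p) ∧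
    (∑ v : Fin n, G.degree v ^ p = 2 * (n-2)^p + (n-2) * 2^p →
      (∀ v, G.degree v = 2 ∨ G.degree v = n - 2) ∧ (∑ v : Fin n, G.degree v) = 4*n - 8) := by
  have hn : 4 ≤ n := by omega
  have hdlo : ∀ v, 2 ≤ G.degree v := degree_ge_two hG hn
  have hdhi : ∀ v, G.degree v ≤ n - 2 := degree_le hG hn
  have hsum := sum_deg_bound hG hn
  set c : ℝ := (n:ℝ) - 2 with hcdef
  have hn5R : (5:ℝ) ≤ (n:ℝ) := by exact_mod_cast hn5
  have hc3 : (3:ℝ) ≤ c := by rw [hcdef]; linarith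
  have hcast : ((n - 2 : ℕ) : ℝ) = c := by
    rw [hcdef, Nat.cast_sub (by omega)]
    norm_num
  have hlo : ∀ v, (2:ℝ) ≤ (G.degree v : ℝ) := fun v => by exact_mod_cast hdlo v
  have hhi : ∀ v, (G.degree v : ℝ) ≤ c := fun v => by
    rw [← hcast]; exact_mod_cast hdhi v
  set D := ∑ v : Fin n, (G.degree v : ℝ) with hDdef
  have hD : D ≤ 4 * c := by
    have h1 : (∑ v : Fin n, G.degree v) ≤ 4*n - 8 := by omega
    have h2 : ((∑ v : Fin n, G.degree v : ℕ) : ℝ) ≤ ((4*n - 8 : ℕ) : ℝ) := by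
      exact_mod_cast h1
    rw [Nat.cast_sum, Nat.cast_sub (by omega)] at h2
    push_cast at h2
    rw [hDdef, hcdef]
    push_cast
    linarith
  have S1 : (c - 2) * (∑ v : Fin n, (G.degree v : ℝ)^p) ≤
      ∑ v : Fin n, ((c - (G.degree v : ℝ)) * 2^p + ((G.degree v : ℝ) - 2) * c^p) := by
    rw [Finset.mul_sum]
    exact Finset.sum_le_sum (fun v _ => pointwise_cvx p (hlo v) (hhi v))
  have S2 : (∑ v : Fin n, ((c - (G.degree v : ℝ)) * 2^p + ((G.degree v : ℝ) - 2) * c^p)) =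
      2^p * ((n:ℝ) * c - D) + c^p * (D - 2*(n:ℝ)) := by
    have h1 : ∀ v : Fin n, (c - (G.degree v:ℝ)) * 2^p + ((G.degree v:ℝ) - 2) * c^p
        = (c * 2^p - 2*c^p) + (G.degree v:ℝ) * (c^p - 2^p) := fun v => by ring
    rw [Finset.sum_congr rfl (fun v _ => h1 v), Finset.sum_add_distrib, Finset.sum_const,
      Finset.card_univ, Fintype.card_fin, ← Finset.sum_mul, ← hDdef, nsmul_eq_mul]
    ring
  have hpowle : (2:ℝ)^p ≤ c^p := pow_le_pow_left₀ (by norm_num) (by linarith) p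
  have hnc : (n:ℝ) = c + 2 := by rw [hcdef]; ring
  have S3 : 2^p * ((n:ℝ) * c - D) + c^p * (D - 2*(n:ℝ)) ≤ (c - 2) * (2*c^p + c*2^p) := by
    have key : 0 ≤ (c^p - 2^p) * (4*c - D) :=
      mul_nonneg (sub_nonneg.2 hpowle) (sub_nonneg.2 hD)
    rw [hnc]
    nlinarith [key]
  have hc2pos : (0:ℝ) < c - 2 := by linarith
  have hreal : (∑ v : Fin n, (G.degree v : ℝ)^p) ≤ 2*c^p + c*2^p := by
    have hchain : (c - 2) * (∑ v : Fin n, (G.degree v : ℝ)^p) ≤ (c - 2) * (2*c^p + c*2^p) := by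
      calc (c - 2) * (∑ v : Fin n, (G.degree v : ℝ)^p) ≤ _ := S1
        _ = _ := S2
        _ ≤ _ := S3
    exact le_of_mul_le_mul_left hchain hc2pos
  have hRHScast : ((2 * (n-2)^p + (n-2) * 2^p : ℕ) : ℝ) = 2*c^p + c*2^p := by
    push_cast [hcast]
    ring
  constructor
  · have h2 : ((∑ v : Fin n, G.degree v ^ p : ℕ) : ℝ) ≤ ((2 * (n-2)^p + (n-2) * 2^p : ℕ) : ℝ) := by
      rw [hRHScast]
      push_cast
      exact hreal
    exact_mod_cast h2
  · intro heq
    have heqR : (∑ v : Fin n, (G.degree v : ℝ)^p) = 2*c^p + c*2^p := by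
      have h2 : ((∑ v : Fin n, G.degree v ^ p : ℕ) : ℝ) = ((2 * (n-2)^p + (n-2) * 2^p : ℕ) : ℝ) := by
        exact_mod_cast heq
      rw [hRHScast] at h2
      push_cast at h2
      linarith [h2]
    constructor
    · intro v
      by_contra hcon
      push_neg at hcon
      have h2v : 2 < G.degree v := lt_of_le_of_ne (hdlo v) (Ne.symm hcon.1)
      have hvc : G.degree v < n - 2 := lt_of_le_of_ne (hdhi v) hcon.2
      have hstrict := pointwise_cvx_strict (by omega : 2 ≤ p)
        (show (2:ℝ) < (G.degree v : ℝ) by exact_mod_cast h2v)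
        (show ((G.degree v : ℝ)) < c by rw [← hcast]; exact_mod_cast hvc)
      have S1' : (c - 2) * (∑ v : Fin n, (G.degree v : ℝ)^p) <
          ∑ v : Fin n, ((c - (G.degree v : ℝ)) * 2^p + ((G.degree v : ℝ) - 2) * c^p) := by
        rw [Finset.mul_sum]
        exact Finset.sum_lt_sum (fun i _ => pointwise_cvx p (hlo i) (hhi i))
          ⟨v, Finset.mem_univ v, hstrict⟩
      rw [heqR, S2] at S1'
      linarith [S3]
    · by_contra hcon
      have hDne : D ≠ 4 * c := by
        intro h
        apply hcon
        have h4c : ((4*n - 8 : ℕ) : ℝ) = 4 * c := by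
          rw [Nat.cast_sub (by omega), hcdef]
          push_cast
          ring
        have h5 : ((∑ v : Fin n, G.degree v : ℕ) : ℝ) = ((4*n - 8 : ℕ) : ℝ) := by
          rw [Nat.cast_sum, ← hDdef, h, h4c]
        exact_mod_cast h5
      have hDlt : D < 4 * c := lt_of_le_of_ne hD hDne
      have hpowlt : (2:ℝ)^p < c^p :=
        pow_lt_pow_left₀ (by linarith) (by norm_num) (by omega)
      have S3' : 2^p * ((n:ℝ) * c - D) + c^p * (D - 2*(n:ℝ)) < (c - 2) * (2*c^p + c*2^p) := by
        have key : 0 < (c^p - 2^p) * (4*c - D) :=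
          mul_pos (sub_pos.2 hpowlt) (sub_pos.2 hDlt)
        rw [hnc]
        nlinarith [key]
      have hS1 := S1
      rw [heqR, S2] at hS1
      linarith

end Convex

section Struct

variable {n : ℕ} {G : SimpleGraph (Fin n)}

def Struct (G : SimpleGraph (Fin n)) (u w : Fin n) : Prop :=
  u ≠ w ∧ ¬ G.Adj u w ∧ (∀ x, x ≠ u → x ≠ w → (G.Adj u x ∧ G.Adj w x)) ∧
    (∀ x y, x ≠ u → x ≠ w → y ≠ u → y ≠ w → ¬ G.Adj x y)

lemma struct_sum (hn : 4 ≤ n) {u w : Fin n} (hs : Struct G u w) [DecidableRel G.Adj] (p : ℕ) :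
    ∑ v : Fin n, G.degree v ^ p = 2 * (n-2)^p + (n-2) * 2^p := by
  classical
  obtain ⟨hne, hnadj, hcross, hind⟩ := hs
  have huniv_sub : ({u, w} : Finset (Fin n)) ⊆ Finset.univ := fun z _ => Finset.mem_univ z
  have hcard_uw : ({u, w} : Finset (Fin n)).card = 2 := Finset.card_pair hne
  have hdegu : G.degree u = n - 2 := by
    have hNu : G.neighborFinset u = Finset.univ \ {u, w} := by
      ext x
      rw [mem_neighborFinset, Finset.mem_sdiff]
      constructor
      · intro h
        refine ⟨Finset.mem_univ _, ?_⟩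
        simp only [Finset.mem_insert, Finset.mem_singleton, not_or]
        exact ⟨fun hx => G.loopless.irrefl _ (hx ▸ h), fun hx => hnadj (hx ▸ h)⟩
      · rintro ⟨-, hx⟩
        simp only [Finset.mem_insert, Finset.mem_singleton, not_or] at hx
        exact (hcross x hx.1 hx.2).1
    rw [← card_neighborFinset_eq_degree, hNu, Finset.card_sdiff_of_subset huniv_sub, hcard_uw]
    simp
  have hdegw : G.degree w = n - 2 := by
    have hNw : G.neighborFinset w = Finset.univ \ {u, w} := by
      ext x
      rw [mem_neighborFinset, Finset.mem_sdiff]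
      constructor
      · intro h
        refine ⟨Finset.mem_univ _, ?_⟩
        simp only [Finset.mem_insert, Finset.mem_singleton, not_or]
        exact ⟨fun hx => hnadj (hx ▸ h).symm, fun hx => G.loopless.irrefl _ (hx ▸ h)⟩
      · rintro ⟨-, hx⟩
        simp only [Finset.mem_insert, Finset.mem_singleton, not_or] at hx
        exact (hcross x hx.1 hx.2).2
    rw [← card_neighborFinset_eq_degree, hNw, Finset.card_sdiff_of_subset huniv_sub, hcard_uw]
    simp
  have hdegx : ∀ x, x ≠ u → x ≠ w → G.degree x = 2 := by
    intro x hxu hxw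
    have hNx : G.neighborFinset x = {u, w} := by
      ext z
      rw [mem_neighborFinset, Finset.mem_insert, Finset.mem_singleton]
      constructor
      · intro h
        by_contra hz
        push_neg at hz
        exact hind x z hxu hxw hz.1 hz.2 h
      · rintro (rfl | rfl)
        · exact ((hcross x hxu hxw).1).symm
        · exact ((hcross x hxu hxw).2).symm
    rw [← card_neighborFinset_eq_degree, hNx, hcard_uw]
  have hsplit := Finset.sum_filter_add_sum_filter_not Finset.univ
    (fun v => v = u ∨ v = w) (fun v => G.degree v ^ p)
  have hfilter : Finset.univ.filter (fun v => v = u ∨ v = w) = {u, w} := by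
    ext z
    simp [Finset.mem_filter, Finset.mem_insert]
  have hfilternot : Finset.univ.filter (fun v => ¬(v = u ∨ v = w)) = Finset.univ \ {u, w} := by
    ext z
    simp [Finset.mem_filter, Finset.mem_sdiff]
  have hsum1 : ∑ v ∈ Finset.univ.filter (fun v => v = u ∨ v = w), G.degree v ^ p
      = 2 * (n-2)^p := by
    rw [hfilter, Finset.sum_pair hne, hdegu, hdegw]
    ring
  have hsum2 : ∑ v ∈ Finset.univ.filter (fun v => ¬(v = u ∨ v = w)), G.degree v ^ p
      = (n-2) * 2^p := by
    rw [hfilternot]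
    have hval : ∀ v ∈ Finset.univ \ ({u, w} : Finset (Fin n)), G.degree v ^ p = 2^p := by
      intro v hv
      rw [Finset.mem_sdiff] at hv
      have := hv.2
      simp only [Finset.mem_insert, Finset.mem_singleton, not_or] at this
      rw [hdegx v this.1 this.2]
    rw [Finset.sum_congr rfl hval, Finset.sum_const, smul_eq_mul,
      Finset.card_sdiff_of_subset huniv_sub, hcard_uw]
    simp
  rw [← hsplit, hsum1, hsum2]

lemma struct_iso (hn : 4 ≤ n) {u w : Fin n} (hs : Struct G u w) :
    Nonempty (G ≃g completeBipartiteGraph (Fin 2) (Fin (n - 2))) := by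
  classical
  obtain ⟨hne, hnadj, hcross, hind⟩ := hs
  set Pm : Fin n → Prop := fun x => x = u ∨ x = w with hPm
  have hcard1 : Fintype.card {x // Pm x} = 2 := by
    rw [Fintype.card_subtype]
    rw [show Finset.univ.filter Pm = {u, w} from by ext z; simp [hPm]]
    exact Finset.card_pair hne
  have hcard2 : Fintype.card {x // ¬ Pm x} = n - 2 := by
    rw [Fintype.card_subtype_compl, hcard1, Fintype.card_fin]
  let e1 : {x // Pm x} ≃ Fin 2 := Fintype.equivFinOfCardEq hcard1
  let e2 : {x // ¬ Pm x} ≃ Fin (n-2) := Fintype.equivFinOfCardEq hcard2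
  let φ : Fin n ≃ (Fin 2 ⊕ Fin (n-2)) := ((Equiv.sumCompl Pm).symm).trans (Equiv.sumCongr e1 e2)
  have hleft : ∀ x : Fin n, Pm x → ∃ i, φ x = Sum.inl i := by
    intro x hx
    refine ⟨e1 ⟨x, hx⟩, ?_⟩
    simp only [φ, Equiv.trans_apply, Equiv.sumCompl_symm_apply_of_pos (p := Pm) hx,
      Equiv.sumCongr_apply]
    rfl
  have hright : ∀ x : Fin n, ¬ Pm x → ∃ j, φ x = Sum.inr j := by
    intro x hx
    refine ⟨e2 ⟨x, hx⟩, ?_⟩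
    simp only [φ, Equiv.trans_apply, Equiv.sumCompl_symm_apply_of_neg (p := Pm) hx,
      Equiv.sumCongr_apply]
    rfl
  have hnotPm : ∀ z, ¬ Pm z → z ≠ u ∧ z ≠ w :=
    fun z hz => ⟨fun h => hz (Or.inl h), fun h => hz (Or.inr h)⟩
  have hadj_char : ∀ a b : Fin n, G.Adj a b ↔ ((Pm a ∧ ¬ Pm b) ∨ (¬ Pm a ∧ Pm b)) := by
    intro a b
    constructor
    · intro hab
      by_cases hA : Pm a <;> by_cases hB : Pm b
      · exfalso
        rcases hA with rfl | rfl <;> rcases hB with rfl | rfl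
        · exact G.loopless.irrefl _ hab
        · exact hnadj hab
        · exact hnadj hab.symm
        · exact G.loopless.irrefl _ hab
      · exact Or.inl ⟨hA, hB⟩
      · exact Or.inr ⟨hA, hB⟩
      · exfalso
        obtain ⟨hA1, hA2⟩ := hnotPm a hA
        obtain ⟨hB1, hB2⟩ := hnotPm b hB
        exact hind a b hA1 hA2 hB1 hB2 hab
    · rintro (⟨hA, hB⟩ | ⟨hA, hB⟩)
      · obtain ⟨hB1, hB2⟩ := hnotPm b hB
        rcases hA with rfl | rfl
        · exact (hcross b hB1 hB2).1
        · exact (hcross b hB1 hB2).2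
      · obtain ⟨hA1, hA2⟩ := hnotPm a hA
        rcases hB with rfl | rfl
        · exact ((hcross a hA1 hA2).1).symm
        · exact ((hcross a hA1 hA2).2).symm
  refine ⟨⟨φ, ?_⟩⟩
  intro a b
  rw [hadj_char a b]
  by_cases hA : Pm a <;> by_cases hB : Pm b
  · obtain ⟨i, hi⟩ := hleft a hA
    obtain ⟨j, hj⟩ := hleft b hB
    rw [hi, hj]
    simp [completeBipartiteGraph, hA, hB]
  · obtain ⟨i, hi⟩ := hleft a hA
    obtain ⟨j, hj⟩ := hright b hB
    rw [hi, hj]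
    simp [completeBipartiteGraph, hA, hB]
  · obtain ⟨i, hi⟩ := hright a hA
    obtain ⟨j, hj⟩ := hleft b hB
    rw [hi, hj]
    simp [completeBipartiteGraph, hA, hB]
  · obtain ⟨i, hi⟩ := hright a hA
    obtain ⟨j, hj⟩ := hright b hB
    rw [hi, hj]
    simp [completeBipartiteGraph, hA, hB]

lemma iso_struct (hn : 4 ≤ n) (f : G ≃g completeBipartiteGraph (Fin 2) (Fin (n - 2))) :
    Struct G (f.symm (Sum.inl 0)) (f.symm (Sum.inl 1)) := by
  have hmap : ∀ (a b : Fin 2 ⊕ Fin (n-2)),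
      G.Adj (f.symm a) (f.symm b) ↔ (completeBipartiteGraph (Fin 2) (Fin (n-2))).Adj a b :=
    fun a b => f.symm.map_adj_iff
  have hform : ∀ x : Fin n, f x ≠ Sum.inl 0 → f x ≠ Sum.inl 1 → ∃ j, f x = Sum.inr j := by
    intro x h0 h1
    cases hfx : f x with
    | inl i =>
      exfalso
      fin_cases i
      · exact h0 hfx
      · exact h1 hfx
    | inr j => exact ⟨j, rfl⟩
  have hsymm_ne : ∀ (x : Fin n) (a : Fin 2 ⊕ Fin (n-2)), x ≠ f.symm a → f x ≠ a := by
    intro x a hx h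
    exact hx (by rw [← h]; simp)
  refine ⟨?_, ?_, ?_, ?_⟩
  · intro h
    have := f.symm.toEquiv.injective h
    simp at this
  · rw [hmap]
    simp [completeBipartiteGraph]
  · intro x hxu hxw
    obtain ⟨j, hj⟩ := hform x (hsymm_ne x _ hxu) (hsymm_ne x _ hxw)
    have hx : x = f.symm (Sum.inr j) := by rw [← hj]; simp
    rw [hx, hmap, hmap]
    constructor <;> simp [completeBipartiteGraph]
  · intro x y hxu hxw hyu hyw
    obtain ⟨j, hj⟩ := hform x (hsymm_ne x _ hxu) (hsymm_ne x _ hxw)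
    obtain ⟨k, hk⟩ := hform y (hsymm_ne y _ hyu) (hsymm_ne y _ hyw)
    have hx : x = f.symm (Sum.inr j) := by rw [← hj]; simp
    have hy : y = f.symm (Sum.inr k) := by rw [← hk]; simp
    rw [hx, hy, hmap]
    simp [completeBipartiteGraph]

end Struct

section EqStruct

variable {n : ℕ} {G : SimpleGraph (Fin n)}

lemma eq_struct (hG : MinimallyTConnected 2 G) (hn5 : 5 ≤ n) [DecidableRel G.Adj]
    (hdeg : ∀ v, G.degree v = 2 ∨ G.degree v = n - 2)
    (hsum : ∑ v : Fin n, G.degree v = 4*n - 8) :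
    ∃ u w, Struct G u w := by
  classical
  have hn : 4 ≤ n := by omega
  set A := Finset.univ.filter (fun v => G.degree v = n - 2) with hA
  have hsplit := Finset.sum_filter_add_sum_filter_not Finset.univ
    (fun v => G.degree v = n - 2) (fun v => G.degree v)
  have h1 : ∑ v ∈ A, G.degree v = A.card * (n-2) := by
    rw [Finset.sum_congr rfl (fun v hv => (Finset.mem_filter.mp hv).2), Finset.sum_const,
      smul_eq_mul]
  have h2 : ∑ v ∈ Finset.univ.filter (fun v => ¬ G.degree v = n - 2), G.degree v
      = (Finset.univ.filter (fun v => ¬ G.degree v = n - 2)).card * 2 := by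
    rw [Finset.sum_congr rfl (fun v hv => ?_), Finset.sum_const, smul_eq_mul]
    have hv2 := (Finset.mem_filter.mp hv).2
    rcases hdeg v with h | h
    · exact h
    · exact absurd h hv2
  have hcards := Finset.card_filter_add_card_filter_not
    (s := Finset.univ (α := Fin n)) (p := fun v => G.degree v = n - 2)
  simp only [Finset.card_univ, Fintype.card_fin] at hcards
  rw [← hA] at hsplit hcards
  have hAcard : A.card = 2 := by
    have hAn : A.card ≤ n := by omega
    have hfn : (Finset.univ.filter (fun v => ¬ G.degree v = n - 2)).card = n - A.card := by
      omega
    have heq : A.card * (n-2) + (n - A.card) * 2 = 4*n - 8 := by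
      rw [← hsum, ← hsplit, h1, h2, hfn]
    have hZ : ((A.card : ℤ) - 2) * ((n:ℤ) - 4) = 0 := by
      have hn2 : 2 ≤ n := by omega
      have h' := congrArg (fun m : ℕ => (m : ℤ)) heq
      push_cast [Nat.cast_sub hAn, Nat.cast_sub hn2, Nat.cast_sub (by omega : 8 ≤ 4*n)] at h'
      nlinarith [h']
    rcases mul_eq_zero.mp hZ with h | h
    · omega
    · omega
  obtain ⟨u, w, huw, hAuw⟩ := Finset.card_eq_two.mp hAcard
  have hdegu : G.degree u = n - 2 := by
    have : u ∈ A := by rw [hAuw]; simp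
    exact (Finset.mem_filter.mp this).2
  have hdegw : G.degree w = n - 2 := by
    have : w ∈ A := by rw [hAuw]; simp
    exact (Finset.mem_filter.mp this).2
  have hdeg2 : ∀ x, x ≠ u → x ≠ w → G.degree x = 2 := by
    intro x hxu hxw
    rcases hdeg x with h | h
    · exact h
    · exfalso
      have : x ∈ A := Finset.mem_filter.mpr ⟨Finset.mem_univ _, h⟩
      rw [hAuw] at this
      simp only [Finset.mem_insert, Finset.mem_singleton] at this
      tauto
  have hnadj : ¬ G.Adj u w := by
    intro hadj
    set B1 := (G.neighborFinset u).erase w with hB1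
    set B2 := (G.neighborFinset w).erase u with hB2
    have hB1card : B1.card = n - 3 := by
      rw [hB1, Finset.card_erase_of_mem (by rwa [mem_neighborFinset]),
        card_neighborFinset_eq_degree, hdegu]
      omega
    have hB2card : B2.card = n - 3 := by
      rw [hB2, Finset.card_erase_of_mem (by rw [mem_neighborFinset]; exact hadj.symm),
        card_neighborFinset_eq_degree, hdegw]
      omega
    have hB1sub : B1 ⊆ Finset.univ \ {u, w} := by
      intro z hz
      rw [hB1, Finset.mem_erase, mem_neighborFinset] at hz
      rw [Finset.mem_sdiff]
      refine ⟨Finset.mem_univ _, ?_⟩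
      simp only [Finset.mem_insert, Finset.mem_singleton, not_or]
      exact ⟨hz.2.ne', hz.1⟩
    have hB2sub : B2 ⊆ Finset.univ \ {u, w} := by
      intro z hz
      rw [hB2, Finset.mem_erase, mem_neighborFinset] at hz
      rw [Finset.mem_sdiff]
      refine ⟨Finset.mem_univ _, ?_⟩
      simp only [Finset.mem_insert, Finset.mem_singleton, not_or]
      exact ⟨hz.1, hz.2.ne'⟩
    have hunion : (B1 ∪ B2).card ≤ n - 2 := by
      have hsub : B1 ∪ B2 ⊆ Finset.univ \ {u, w} := Finset.union_subset hB1sub hB2sub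
      have := Finset.card_le_card hsub
      rwa [Finset.card_sdiff_of_subset (fun z _ => Finset.mem_univ z), Finset.card_pair huw,
        Finset.card_univ, Fintype.card_fin] at this
    have hinter : 1 ≤ (B1 ∩ B2).card := by
      have := Finset.card_union_add_card_inter B1 B2
      omega
    have hpos : 0 < (B1 ∩ B2).card := by omega
    obtain ⟨z, hz⟩ := Finset.card_pos.mp hpos
    rw [Finset.mem_inter, hB1, hB2, Finset.mem_erase, Finset.mem_erase,
      mem_neighborFinset, mem_neighborFinset] at hz
    exact triangle_free hG hn hz.1.2 hz.2.2.symm hadj.symm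
  have hNu : G.neighborFinset u = Finset.univ \ {u, w} := by
    apply Finset.eq_of_subset_of_card_le
    · intro z hz
      rw [mem_neighborFinset] at hz
      rw [Finset.mem_sdiff]
      refine ⟨Finset.mem_univ _, ?_⟩
      simp only [Finset.mem_insert, Finset.mem_singleton, not_or]
      exact ⟨hz.ne', fun h => hnadj (h ▸ hz)⟩
    · rw [Finset.card_sdiff_of_subset (fun z _ => Finset.mem_univ z), Finset.card_pair huw,
        Finset.card_univ, Fintype.card_fin, card_neighborFinset_eq_degree, hdegu]
  have hNw : G.neighborFinset w = Finset.univ \ {u, w} := by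
    apply Finset.eq_of_subset_of_card_le
    · intro z hz
      rw [mem_neighborFinset] at hz
      rw [Finset.mem_sdiff]
      refine ⟨Finset.mem_univ _, ?_⟩
      simp only [Finset.mem_insert, Finset.mem_singleton, not_or]
      exact ⟨fun h => hnadj (h ▸ hz).symm, hz.ne'⟩
    · rw [Finset.card_sdiff_of_subset (fun z _ => Finset.mem_univ z), Finset.card_pair huw,
        Finset.card_univ, Fintype.card_fin, card_neighborFinset_eq_degree, hdegw]
  refine ⟨u, w, huw, hnadj, ?_, ?_⟩
  · intro x hxu hxw
    constructor
    · have : x ∈ G.neighborFinset u := by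
        rw [hNu, Finset.mem_sdiff]
        refine ⟨Finset.mem_univ _, ?_⟩
        simp only [Finset.mem_insert, Finset.mem_singleton, not_or]
        exact ⟨hxu, hxw⟩
      rwa [mem_neighborFinset] at this
    · have : x ∈ G.neighborFinset w := by
        rw [hNw, Finset.mem_sdiff]
        refine ⟨Finset.mem_univ _, ?_⟩
        simp only [Finset.mem_insert, Finset.mem_singleton, not_or]
        exact ⟨hxu, hxw⟩
      rwa [mem_neighborFinset] at this
  · intro x y hxu hxw hyu hyw hadj
    have hxy : x ≠ y := hadj.ne
    have hsub : ({u, w, y} : Finset (Fin n)) ⊆ G.neighborFinset x := by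
      intro z hz
      simp only [Finset.mem_insert, Finset.mem_singleton] at hz
      rw [mem_neighborFinset]
      rcases hz with rfl | rfl | rfl
      · have : x ∈ G.neighborFinset z := by
          rw [hNu, Finset.mem_sdiff]
          exact ⟨Finset.mem_univ _, by simp [hxu, hxw]⟩
        rw [mem_neighborFinset] at this
        exact this.symm
      · have : x ∈ G.neighborFinset z := by
          rw [hNw, Finset.mem_sdiff]
          exact ⟨Finset.mem_univ _, by simp [hxu, hxw]⟩
        rw [mem_neighborFinset] at this
        exact this.symm
      · exact hadj
    have hcard3 : ({u, w, y} : Finset (Fin n)).card = 3 := by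
      rw [Finset.card_insert_of_notMem (by simp [huw, Ne.symm hyu]),
        Finset.card_insert_of_notMem (by simp [Ne.symm hyw]), Finset.card_singleton]
    have := Finset.card_le_card hsub
    rw [hcard3, card_neighborFinset_eq_degree, hdeg2 x hxu hxw] at this
    omega

lemma struct_of_four (hG : MinimallyTConnected 2 G) (hn4 : n = 4) [DecidableRel G.Adj] :
    ∃ u w, Struct G u w := by
  classical
  have hn : 4 ≤ n := by omega
  have hdeg : ∀ v, G.degree v = 2 := by
    intro v
    have h1 := degree_ge_two hG hn v
    have h2 := degree_le hG hn v
    omega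
  have h0 : (0:ℕ) < n := by omega
  set a : Fin n := ⟨0, h0⟩ with hadef
  obtain ⟨s, t, hst, hNa⟩ := Finset.card_eq_two.mp
    (show (G.neighborFinset a).card = 2 by rw [card_neighborFinset_eq_degree]; exact hdeg a)
  have hAs : G.Adj a s := by rw [← mem_neighborFinset, hNa]; simp
  have hAt : G.Adj a t := by rw [← mem_neighborFinset, hNa]; simp
  have hsa : s ≠ a := hAs.ne'
  have hta : t ≠ a := hAt.ne'
  have hstadj : ¬ G.Adj s t := fun h => triangle_free hG hn hAs h hAt.symm
  obtain ⟨b, hb⟩ := exists_other hn {a, s, t} (by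
    refine le_trans (Finset.card_insert_le _ _) ?_
    refine le_trans (Nat.add_le_add_right (Finset.card_insert_le _ _) 1) ?_
    simp)
  simp only [Finset.mem_insert, Finset.mem_singleton, not_or] at hb
  obtain ⟨hba, hbs, hbt⟩ := hb
  have hnab : ¬ G.Adj a b := by
    intro h
    have : b ∈ G.neighborFinset a := by rwa [mem_neighborFinset]
    rw [hNa] at this
    simp only [Finset.mem_insert, Finset.mem_singleton] at this
    tauto
  have huniv : (Finset.univ : Finset (Fin n)) = {a, s, t, b} := by
    symm
    apply Finset.eq_univ_of_card
    rw [Finset.card_insert_of_notMem (by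
        simp only [Finset.mem_insert, Finset.mem_singleton]
        push_neg
        exact ⟨Ne.symm hsa, Ne.symm hta, fun h => hba h.symm⟩),
      Finset.card_insert_of_notMem (by
        simp only [Finset.mem_insert, Finset.mem_singleton]
        push_neg
        exact ⟨hst, fun h => hbs h.symm⟩),
      Finset.card_insert_of_notMem (by
        simp only [Finset.mem_singleton]
        exact fun h => hbt h.symm), Finset.card_singleton, Fintype.card_fin]
    omega
  have hall : ∀ x : Fin n, x = a ∨ x = s ∨ x = t ∨ x = b := by
    intro x
    have : x ∈ ({a, s, t, b} : Finset (Fin n)) := huniv ▸ Finset.mem_univ x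
    simpa using this
  -- second neighbor of s is b
  have hsb : G.Adj s b := by
    obtain ⟨z1, z2, hz12, hNs⟩ := Finset.card_eq_two.mp
      (show (G.neighborFinset s).card = 2 by rw [card_neighborFinset_eq_degree]; exact hdeg s)
    have haN : a ∈ G.neighborFinset s := by rw [mem_neighborFinset]; exact hAs.symm
    have hother : ∃ z, z ∈ G.neighborFinset s ∧ z ≠ a := by
      rw [hNs] at haN ⊢
      simp only [Finset.mem_insert, Finset.mem_singleton] at haN
      rcases haN with h | h
      · exact ⟨z2, by simp, fun hh => hz12 (h.symm.trans hh.symm)⟩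
      · exact ⟨z1, by simp, fun hh => hz12 (hh.trans h)⟩
    obtain ⟨z, hzN, hza⟩ := hother
    rw [mem_neighborFinset] at hzN
    have hzs : z ≠ s := hzN.ne'
    have hzt : z ≠ t := fun h => hstadj (h ▸ hzN)
    rcases hall z with rfl | rfl | rfl | rfl
    · exact absurd rfl hza
    · exact absurd rfl hzs
    · exact absurd rfl hzt
    · exact hzN
  have htb : G.Adj t b := by
    obtain ⟨z1, z2, hz12, hNt⟩ := Finset.card_eq_two.mp
      (show (G.neighborFinset t).card = 2 by rw [card_neighborFinset_eq_degree]; exact hdeg t)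
    have haN : a ∈ G.neighborFinset t := by rw [mem_neighborFinset]; exact hAt.symm
    have hother : ∃ z, z ∈ G.neighborFinset t ∧ z ≠ a := by
      rw [hNt] at haN ⊢
      simp only [Finset.mem_insert, Finset.mem_singleton] at haN
      rcases haN with h | h
      · exact ⟨z2, by simp, fun hh => hz12 (h.symm.trans hh.symm)⟩
      · exact ⟨z1, by simp, fun hh => hz12 (hh.trans h)⟩
    obtain ⟨z, hzN, hza⟩ := hother
    rw [mem_neighborFinset] at hzN
    have hzt : z ≠ t := hzN.ne'
    have hzs : z ≠ s := fun h => hstadj (h ▸ hzN).symm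
    rcases hall z with rfl | rfl | rfl | rfl
    · exact absurd rfl hza
    · exact absurd rfl hzs
    · exact absurd rfl hzt
    · exact hzN
  refine ⟨a, b, Ne.symm hba, hnab, ?_, ?_⟩
  · intro x hxa hxb
    rcases hall x with rfl | rfl | rfl | rfl
    · exact absurd rfl hxa
    · exact ⟨hAs, hsb.symm⟩
    · exact ⟨hAt, htb.symm⟩
    · exact absurd rfl hxb
  · intro x y hxa hxb hya hyb hadj
    rcases hall x with rfl | rfl | rfl | rfl
    · exact hxa rfl
    · rcases hall y with rfl | rfl | rfl | rfl
      · exact hya rfl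
      · exact G.loopless.irrefl _ hadj
      · exact hstadj hadj
      · exact hyb rfl
    · rcases hall y with rfl | rfl | rfl | rfl
      · exact hya rfl
      · exact hstadj hadj.symm
      · exact G.loopless.irrefl _ hadj
      · exact hyb rfl
    · exact hxb rfl

end EqStruct

end DPMTC


theorem degree_power_minimally_two_connected (p n : ℕ) (hp : 1 < p) (hn : 4 ≤ n)
    (G : SimpleGraph (Fin n)) [DecidableRel G.Adj]
    (hG : MinimallyTConnected 2 G) :
    (∑ v : Fin n, G.degree v ^ p) ≤ 2 * (n - 2) ^ p + (n - 2) * 2 ^ p ∧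
      ((∑ v : Fin n, G.degree v ^ p) = 2 * (n - 2) ^ p + (n - 2) * 2 ^ p ↔
        Nonempty (G ≃g completeBipartiteGraph (Fin 2) (Fin (n - 2)))) := by
  by_cases h5 : 5 ≤ n
  · obtain ⟨hle, heqimp⟩ := DPMTC.sum_pow_analysis hG h5 p hp
    refine ⟨hle, ⟨?_, ?_⟩⟩
    · intro heq
      obtain ⟨hdeg, hsum⟩ := heqimp heq
      obtain ⟨u, w, hs⟩ := DPMTC.eq_struct hG h5 hdeg hsum
      exact DPMTC.struct_iso hn hs
    · rintro ⟨f⟩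
      exact DPMTC.struct_sum hn (DPMTC.iso_struct hn f) p
  · have hn4 : n = 4 := by omega
    obtain ⟨u, w, hs⟩ := DPMTC.struct_of_four hG hn4
    have hsum := DPMTC.struct_sum hn hs p
    exact ⟨le_of_eq hsum, ⟨fun _ => DPMTC.struct_iso hn hs, fun _ => hsum⟩⟩
end

section
/- Let p > 1 and k ≥ 1 be integers. If G is a k-degenerate simple graph with n ≥ k+1 vertices, then e_p(G) ≤ k·(n-1)^p + (n-k)·k^p, with equality if and only if G is isomorphic to S_{n,k}, the join of the complete graph K_k with n-k isolated vertices. -/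
/-- `G` is `k`-degenerate: every (induced) subgraph on a nonempty vertex set has a
vertex of degree at most `k` in that subgraph. -/
def KDegenerate {V : Type*} [DecidableEq V] (k : ℕ) (G : SimpleGraph V)
    [DecidableRel G.Adj] : Prop :=
  ∀ s : Finset V, s.Nonempty → ∃ v ∈ s, (s.filter (fun w => G.Adj v w)).card ≤ k

/-- The graph `S_{n,k}` on vertex set `Fin n`: the complete graph on the first `k`
vertices, with each of them joined to each of the remaining `n - k` vertices. -/
def completeSplitGraph (n k : ℕ) : SimpleGraph (Fin n) :=
  SimpleGraph.fromRel (fun v _ => v.val < k)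


lemma convex_aux (p x : ℕ) : ((x+2)^p + x^p) * (x+1) + (x+2)^p = ((x+2)^(p+1) + x^(p+1)) + x^p := by
  ring

lemma convex_step (p x : ℕ) : 2 * (x+1)^p ≤ (x+2)^p + x^p := by
  induction p with
  | zero => simp
  | succ p ih =>
    have h1 : 2 * (x+1)^(p+1) = (2 * (x+1)^p) * (x+1) := by ring
    have h2 : (2*(x+1)^p) * (x+1) ≤ ((x+2)^p + x^p) * (x+1) :=
      Nat.mul_le_mul_right _ ih
    have hx : x^p ≤ (x+2)^p := Nat.pow_le_pow_left (by omega) p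
    have h3 := convex_aux p x
    omega

lemma convex_step_strict (p x : ℕ) (hp : 2 ≤ p) : 2 * (x+1)^p < (x+2)^p + x^p := by
  induction p with
  | zero => omega
  | succ p ih =>
    rcases Nat.lt_or_ge p 2 with h | h
    · interval_cases p
      · omega
      · have e1 : 2*(x+1)^(1+1) = 2*x^2 + 4*x + 2 := by ring
        have e2 : (x+2)^(1+1) + x^(1+1) = 2*x^2 + 4*x + 4 := by ring
        omega
    · have ih' := ih h
      have h1 : 2 * (x+1)^(p+1) = (2 * (x+1)^p) * (x+1) := by ring
      have h2 : (2*(x+1)^p) * (x+1) < ((x+2)^p + x^p) * (x+1) :=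
        Nat.mul_lt_mul_of_lt_of_le ih' (le_refl _) (by omega)
      have hx : x^p ≤ (x+2)^p := Nat.pow_le_pow_left (by omega) p
      have h3 := convex_aux p x
      omega

lemma step_mono (p : ℕ) {x y : ℕ} (h : x ≤ y) : (x+1)^p + y^p ≤ (y+1)^p + x^p := by
  induction y, h using Nat.le_induction with
  | base => omega
  | succ y hy ih =>
    have h1 := convex_step p y
    have e : (y+1+1)^p = (y+2)^p := by norm_num
    omega

lemma step_strict (p : ℕ) (hp : 2 ≤ p) {x y : ℕ} (h : x < y) :
    (x+1)^p + y^p < (y+1)^p + x^p := by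
  induction y, h using Nat.le_induction with
  | base =>
    have := convex_step_strict p x hp
    have e : (x+1+1)^p = (x+2)^p := by norm_num
    have e2 : (x.succ)^p = (x+1)^p := rfl
    have e3 : (x.succ+1)^p = (x+1+1)^p := rfl
    omega
  | succ y hy ih =>
    have h1 := convex_step p y
    have e : (y+1+1)^p = (y+2)^p := by norm_num
    omega


open Finset



section Delete
variable {m : ℕ} (G : SimpleGraph (Fin (m+1))) [DecidableRel G.Adj] (v : Fin (m+1))

/-- embedding of Fin m onto the complement of v -/
def delMap : Fin m → Fin (m+1) := fun i => Equiv.swap v (Fin.last m) i.castSucc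

lemma delMap_injective : Function.Injective (delMap (m := m) v) :=
  fun a b h => Fin.castSucc_injective m ((Equiv.swap v (Fin.last m)).injective h)

lemma delMap_ne (i : Fin m) : delMap v i ≠ v := by
  intro h
  have : (i.castSucc : Fin (m+1)) = Fin.last m := by
    have := congrArg (Equiv.swap v (Fin.last m)) h
    simpa [delMap, Equiv.swap_apply_right] using this
  exact absurd this (Fin.castSucc_lt_last i).ne

lemma delMap_surj {w : Fin (m+1)} (hw : w ≠ v) : ∃ i, delMap v i = w := by
  set u := Equiv.swap v (Fin.last m) w with hu
  have hune : u ≠ Fin.last m := by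
    intro h
    apply hw
    have := congrArg (Equiv.swap v (Fin.last m)) h
    simpa [hu, Equiv.swap_apply_right] using this
  have hlt : u.val < m := by
    have h1 := u.isLt
    have h2 : u.val ≠ m := fun h => hune (Fin.ext h)
    omega
  refine ⟨⟨u.val, hlt⟩, ?_⟩
  simp only [delMap]
  have hcs : (Fin.castSucc ⟨u.val, hlt⟩ : Fin (m+1)) = u := by
    ext; simp
  rw [hcs]
  simp [hu]


noncomputable section

def delG : SimpleGraph (Fin m) := G.comap (delMap v)

instance delG_dec : DecidableRel (delG G v).Adj :=
  fun a b => inferInstanceAs (Decidable (G.Adj (delMap v a) (delMap v b)))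

lemma delG_adj (a b : Fin m) : (delG G v).Adj a b ↔ G.Adj (delMap v a) (delMap v b) := Iff.rfl

lemma delG_image_nbhd (i : Fin m) :
    Finset.image (delMap v) ((delG G v).neighborFinset i)
      = (G.neighborFinset (delMap v i)).erase v := by
  ext w
  simp only [Finset.mem_image, SimpleGraph.mem_neighborFinset, Finset.mem_erase, delG_adj]
  constructor
  · rintro ⟨j, hadj, rfl⟩
    exact ⟨delMap_ne v j, hadj⟩
  · rintro ⟨hne, hadj⟩
    obtain ⟨j, rfl⟩ := delMap_surj v hne
    exact ⟨j, hadj, rfl⟩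

lemma delG_degree (i : Fin m) :
    G.degree (delMap v i) = (delG G v).degree i + (if G.Adj (delMap v i) v then 1 else 0) := by
  have hcard : (delG G v).degree i = ((G.neighborFinset (delMap v i)).erase v).card := by
    rw [← delG_image_nbhd, Finset.card_image_of_injective _ (delMap_injective v)]
    rfl
  by_cases h : G.Adj (delMap v i) v
  · have hv : v ∈ G.neighborFinset (delMap v i) := by
      rw [SimpleGraph.mem_neighborFinset]; exact h
    have h2 := Finset.card_erase_of_mem hv
    have hpos : 1 ≤ (G.neighborFinset (delMap v i)).card := Finset.card_pos.2 ⟨v, hv⟩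
    have h3 : (G.neighborFinset (delMap v i)).card = G.degree (delMap v i) :=
      SimpleGraph.card_neighborFinset_eq_degree _ _
    simp only [h, if_true]
    omega
  · have hv : v ∉ G.neighborFinset (delMap v i) := by
      rw [SimpleGraph.mem_neighborFinset]; exact h
    rw [Finset.erase_eq_of_notMem hv,
      SimpleGraph.card_neighborFinset_eq_degree] at hcard
    simp [h, hcard.symm]

lemma delG_deg_v :
    G.degree v = (Finset.univ.filter fun i => G.Adj (delMap v i) v).card := by
  have himg : Finset.image (delMap v) (Finset.univ.filter fun i => G.Adj (delMap v i) v)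
      = G.neighborFinset v := by
    ext w
    simp only [Finset.mem_image, Finset.mem_filter, Finset.mem_univ, true_and,
      SimpleGraph.mem_neighborFinset]
    constructor
    · rintro ⟨j, hadj, rfl⟩
      exact hadj.symm
    · intro hadj
      obtain ⟨j, rfl⟩ := delMap_surj v (G.ne_of_adj hadj).symm
      exact ⟨j, hadj.symm, rfl⟩
  rw [← SimpleGraph.card_neighborFinset_eq_degree, ← himg,
    Finset.card_image_of_injective _ (delMap_injective v)]

lemma delG_degenerate {k : ℕ} (hG : KDegenerate k G) : KDegenerate k (delG G v) := by
  intro s hs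
  obtain ⟨u, hu, hcard⟩ := hG (s.image (delMap v)) (hs.image _)
  obtain ⟨j, hj, rfl⟩ := Finset.mem_image.mp hu
  refine ⟨j, hj, ?_⟩
  have himg : Finset.image (delMap v) (s.filter fun w => (delG G v).Adj j w)
      = (s.image (delMap v)).filter (fun w => G.Adj (delMap v j) w) := by
    ext w
    simp only [Finset.mem_image, Finset.mem_filter, delG_adj]
    constructor
    · rintro ⟨i, ⟨his, hadj⟩, rfl⟩
      exact ⟨⟨i, his, rfl⟩, hadj⟩
    · rintro ⟨⟨i, his, rfl⟩, hadj⟩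
      exact ⟨i, ⟨his, hadj⟩, rfl⟩
  calc (s.filter fun w => (delG G v).Adj j w).card
      = ((s.image (delMap v)).filter (fun w => G.Adj (delMap v j) w)).card := by
        rw [← himg, Finset.card_image_of_injective _ (delMap_injective v)]
    _ ≤ k := hcard

lemma sum_split (F : Fin (m+1) → ℕ) :
    ∑ u, F u = F v + ∑ i : Fin m, F (delMap v i) := by
  have himg : Finset.image (delMap v) Finset.univ = Finset.univ.erase v := by
    apply Finset.eq_of_subset_of_card_le
    · intro w hw
      obtain ⟨i, _, rfl⟩ := Finset.mem_image.mp hw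
      exact Finset.mem_erase.mpr ⟨delMap_ne v i, Finset.mem_univ _⟩
    · rw [Finset.card_erase_of_mem (Finset.mem_univ v),
        Finset.card_image_of_injective _ (delMap_injective v)]
      simp
  rw [← Finset.add_sum_erase _ F (Finset.mem_univ v), ← himg,
    Finset.sum_image (fun a _ b _ h => delMap_injective v h)]

end

end Delete

lemma rearrange {a b X Y : ℕ} (hab : a ≤ b) (hXY : X ≤ Y) : a*Y + b*X ≤ b*Y + a*X := by
  obtain ⟨d, rfl⟩ := Nat.exists_eq_add_of_le hab
  obtain ⟨e, rfl⟩ := Nat.exists_eq_add_of_le hXY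
  ring_nf
  nlinarith []

lemma count_eq {X Y a b m : ℕ} (hY : Y < X) (ha : a ≤ m) (hb : b ≤ m)
    (h : a*X + (m-a)*Y = b*X + (m-b)*Y) : a = b := by
  have h' : (a:ℤ)*X + ((m:ℤ)-a)*Y = (b:ℤ)*X + ((m:ℤ)-b)*Y := by
    have := congrArg (Nat.cast : ℕ → ℤ) h
    push_cast [Nat.cast_sub ha, Nat.cast_sub hb] at this
    push_cast
    linarith [this]
  have h2 : ((a:ℤ) - b) * ((X:ℤ) - Y) = 0 := by linear_combination h'
  rcases mul_eq_zero.mp h2 with h3 | h3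
  · omega
  · exfalso; omega

lemma main_ind (p k : ℕ) (hp : 2 ≤ p) (hk : 1 ≤ k) :
    ∀ n, k + 1 ≤ n → ∀ (G : SimpleGraph (Fin n)) [DecidableRel G.Adj], KDegenerate k G →
      ((∑ u, G.degree u ^ p) ≤ k * (n-1)^p + (n-k) * k^p ∧
      ((∑ u, G.degree u ^ p) = k * (n-1)^p + (n-k) * k^p →
        ∀ u, G.degree u = k ∨ G.degree u = n - 1)) := by
  intro n hn
  induction n, hn using Nat.le_induction with
  | base =>
    intro G instG hG
    have hdeg : ∀ u, G.degree u ≤ k := by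
      intro u
      have := G.degree_lt_card_verts u
      simp only [Fintype.card_fin] at this
      omega
    have hpw : ∀ u ∈ Finset.univ, G.degree u ^ p ≤ k ^ p :=
      fun u _ => Nat.pow_le_pow_left (hdeg u) p
    have hb : ∑ u, G.degree u ^ p ≤ ∑ _u : Fin (k+1), k^p := Finset.sum_le_sum hpw
    have hc : ∑ _u : Fin (k+1), k^p = (k+1) * k^p := by
      simp [Finset.sum_const, Finset.card_univ, mul_comm]
    have hgoal_eq : k * (k+1-1)^p + (k+1-k)*k^p = (k+1)*k^p := by
      have e1 : k+1-1 = k := rfl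
      have e2 : k+1-k = 1 := by omega
      rw [e1, e2]; ring
    constructor
    · omega
    · intro hEq u
      have hpt := (Finset.sum_eq_sum_iff_of_le hpw).mp (by omega) u (Finset.mem_univ u)
      left
      by_contra hne
      have hlt : G.degree u < k := lt_of_le_of_ne (hdeg u) hne
      have := Nat.pow_lt_pow_left hlt (by omega : p ≠ 0)
      omega
  | succ m hm ih =>
    intro G instG hG
    obtain ⟨M, rfl⟩ : ∃ M, m = M + 1 := ⟨m-1, by omega⟩
    obtain ⟨v, -, hdv'⟩ := hG Finset.univ Finset.univ_nonempty
    have hdvk : G.degree v ≤ k := by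
      rwa [← SimpleGraph.card_neighborFinset_eq_degree, SimpleGraph.neighborFinset_eq_filter]
    have hHdeg : ∀ i, (delG G v).degree i ≤ M := by
      intro i
      have := (delG G v).degree_lt_card_verts i
      simp only [Fintype.card_fin] at this
      omega
    have hHdegen := delG_degenerate G v hG
    obtain ⟨ihle, iheq⟩ := ih (delG G v) hHdegen
    have hMsub : M + 1 - 1 = M := rfl
    rw [hMsub] at ihle iheq
    set S0 := ∑ i, (delG G v).degree i ^ p with hS0
    set c : Fin (M+1) → ℕ := fun i => if G.Adj (delMap v i) v then 1 else 0 with hc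
    have hpw : ∀ i ∈ Finset.univ, (G.degree (delMap v i))^p + c i * M^p
        ≤ (delG G v).degree i ^ p + c i * (M+1)^p := by
      intro i _
      by_cases hadj : G.Adj (delMap v i) v
      · have hd := delG_degree G v i
        rw [if_pos hadj] at hd
        have hs := step_mono p (hHdeg i)
        simp only [hc, if_pos hadj, one_mul, hd]
        omega
      · have hd := delG_degree G v i
        rw [if_neg hadj, add_zero] at hd
        simp only [hc, if_neg hadj, zero_mul, add_zero, hd]
        exact le_refl _
    have hcsum : ∑ i, c i = G.degree v := by
      rw [delG_deg_v G v, Finset.card_filter]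
    have hA1' : ∑ i, ((G.degree (delMap v i))^p + c i * M^p)
        ≤ ∑ i, ((delG G v).degree i ^ p + c i * (M+1)^p) := Finset.sum_le_sum hpw
    have hsplit : ∀ X : ℕ, ∑ i, ((G.degree (delMap v i))^p + c i * X)
        = (∑ i, (G.degree (delMap v i))^p) + G.degree v * X := by
      intro X
      rw [Finset.sum_add_distrib, ← Finset.sum_mul, hcsum]
    have hsplit2 : ∀ X : ℕ, ∑ i, ((delG G v).degree i ^ p + c i * X)
        = S0 + G.degree v * X := by
      intro X
      rw [Finset.sum_add_distrib, ← Finset.sum_mul, hcsum, hS0]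
    have hA1 : (∑ i, (G.degree (delMap v i))^p) + G.degree v * M^p
        ≤ S0 + G.degree v * (M+1)^p := by
      rw [← hsplit, ← hsplit2]; exact hA1'
    have hA4 : ∑ u, G.degree u ^ p
        = G.degree v ^ p + ∑ i, (G.degree (delMap v i))^p :=
      sum_split v (fun u => G.degree u ^ p)
    have hMp : M ^ p ≤ (M+1)^p := Nat.pow_le_pow_left (by omega) p
    have hA3 : G.degree v ^ p + G.degree v * (M+1)^p + k * M^p
        ≤ k^p + k*(M+1)^p + G.degree v * M^p := by
      have h1 : G.degree v ^ p ≤ k ^ p := Nat.pow_le_pow_left hdvk p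
      have h2 := rearrange hdvk hMp
      linarith
    have he5 : (M+2-k)*k^p = (M+1-k)*k^p + k^p := by
      have e : M+2-k = (M+1-k)+1 := by omega
      rw [e]; ring
    have hgle : ∑ u, G.degree u ^ p ≤ k * (M+2-1)^p + (M+2-k)*k^p := by
      have e : M+2-1 = M+1 := rfl
      rw [e, he5]
      linarith
    refine ⟨hgle, ?_⟩
    intro hEq
    have he6 : k * (M+2-1)^p + (M+2-k)*k^p = k*(M+1)^p + ((M+1-k)*k^p + k^p) := by
      have e : M+2-1 = M+1 := rfl
      rw [e, he5]
    rw [he6] at hEq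
    -- extract the three equalities
    have hE3 : G.degree v ^ p + G.degree v * (M+1)^p + k * M^p
        = k^p + k*(M+1)^p + G.degree v * M^p := by
      apply le_antisymm hA3
      linarith
    have hE2 : S0 = k*M^p + (M+1-k)*k^p := by
      apply le_antisymm ihle
      linarith
    have hE1 : (∑ i, (G.degree (delMap v i))^p) + G.degree v * M^p
        = S0 + G.degree v * (M+1)^p := by
      apply le_antisymm hA1
      linarith
    -- dv = k
    have hdveq : G.degree v = k := by
      by_contra hne
      have hlt : G.degree v < k := lt_of_le_of_ne hdvk hne
      have h1 : G.degree v ^ p < k ^ p := Nat.pow_lt_pow_left hlt (by omega)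
      have h2 := rearrange hdvk hMp
      linarith
    -- pointwise equality
    have hpt : ∀ i ∈ Finset.univ, (G.degree (delMap v i))^p + c i * M^p
        = (delG G v).degree i ^ p + c i * (M+1)^p := by
      apply (Finset.sum_eq_sum_iff_of_le hpw).mp
      rw [hsplit, hsplit2]
      exact hE1
    -- neighbors have H-degree M
    have hnb : ∀ i, G.Adj (delMap v i) v → (delG G v).degree i = M := by
      intro i hadj
      have hd := delG_degree G v i
      rw [if_pos hadj] at hd
      have h1 := hpt i (Finset.mem_univ i)
      simp only [hc, if_pos hadj, one_mul, hd] at h1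
      by_contra hne
      have hlt : (delG G v).degree i < M := lt_of_le_of_ne (hHdeg i) hne
      have := step_strict p hp hlt
      omega
    have hHdegs : ∀ i, (delG G v).degree i = k ∨ (delG G v).degree i = M := iheq hE2
    -- non-neighbors have H-degree k
    have hnonnb : ∀ i, ¬ G.Adj (delMap v i) v → (delG G v).degree i = k := by
      intro i hadj
      by_cases hMk : M = k
      · rcases hHdegs i with h | h
        · exact h
        · omega
      · have hMgt : k < M := by omega
        have hXY : k ^ p < M ^ p := Nat.pow_lt_pow_left hMgt (by omega)
        obtain ⟨a, ha⟩ : ∃ a, (Finset.univ.filter (fun j => (delG G v).degree j = M)).card = a :=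
          ⟨_, rfl⟩
        have haM : a ≤ M + 1 := by
          rw [← ha]
          calc (Finset.univ.filter (fun j => (delG G v).degree j = M)).card
              ≤ Finset.univ.card := Finset.card_filter_le _ _
            _ = M + 1 := by simp
        have hcards := Finset.card_filter_add_card_filter_not
          (s := (Finset.univ : Finset (Fin (M+1)))) (p := fun j => (delG G v).degree j = M)
        rw [ha] at hcards
        simp only [Finset.card_univ, Fintype.card_fin] at hcards
        have hS0a : S0 = a * M^p + (M+1-a)*k^p := by
          rw [hS0, ← Finset.sum_filter_add_sum_filter_not Finset.univ
            (fun j => (delG G v).degree j = M) (fun j => (delG G v).degree j ^ p)]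
          congr 1
          · rw [Finset.sum_congr rfl (fun j hj => by
              rw [(Finset.mem_filter.mp hj).2]), Finset.sum_const, smul_eq_mul, ha]
          · rw [Finset.sum_congr rfl (fun j hj => by
              have h3 := (Finset.mem_filter.mp hj).2
              rcases hHdegs j with h | h
              · rw [h]
              · exact absurd h h3), Finset.sum_const, smul_eq_mul]
            congr 1
            omega
        have hak : a = k := by
          apply count_eq hXY haM (by omega)
          rw [← hS0a, hE2]
        have hF1card : (Finset.univ.filter (fun j => G.Adj (delMap v j) v)).card = k := by
          rw [← delG_deg_v G v, hdveq]
        have hsub : (Finset.univ.filter (fun j => G.Adj (delMap v j) v))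
            ⊆ (Finset.univ.filter (fun j => (delG G v).degree j = M)) := by
          intro j hj
          rw [Finset.mem_filter]
          exact ⟨Finset.mem_univ j, hnb j (Finset.mem_filter.mp hj).2⟩
        have hF12 := Finset.eq_of_subset_of_card_le hsub (by omega)
        rcases hHdegs i with h | h
        · exact h
        · exfalso
          have hmem : i ∈ (Finset.univ.filter (fun j => (delG G v).degree j = M)) :=
            Finset.mem_filter.mpr ⟨Finset.mem_univ i, h⟩
          rw [← hF12, Finset.mem_filter] at hmem
          exact hadj hmem.2
    intro u
    rcases eq_or_ne u v with rfl | hne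
    · left; exact hdveq
    · obtain ⟨i, rfl⟩ := delMap_surj v hne
      have hd := delG_degree G v i
      by_cases hadj : G.Adj (delMap v i) v
      · right
        rw [if_pos hadj] at hd
        rw [hd, hnb i hadj]
        omega
      · left
        rw [if_neg hadj, add_zero] at hd
        rw [hd, hnonnb i hadj]

lemma csg_adj (n k : ℕ) (a b : Fin n) :
    (completeSplitGraph n k).Adj a b ↔ a ≠ b ∧ (a.val < k ∨ b.val < k) := Iff.rfl

instance csg_dec (n k : ℕ) : DecidableRel (completeSplitGraph n k).Adj := fun a b =>
  decidable_of_iff (a ≠ b ∧ (a.val < k ∨ b.val < k))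
    (SimpleGraph.fromRel_adj (fun v _ => v.val < k) a b).symm

lemma card_filter_lt (n k : ℕ) (h : k ≤ n) :
    ((Finset.univ : Finset (Fin n)).filter (fun w => w.val < k)).card = k := by
  have himg : (Finset.univ : Finset (Fin n)).filter (fun w => w.val < k)
      = Finset.image (Fin.castLE h) Finset.univ := by
    ext w
    simp only [Finset.mem_filter, Finset.mem_univ, true_and, Finset.mem_image]
    constructor
    · intro hw
      exact ⟨⟨w.val, hw⟩, Fin.ext rfl⟩
    · rintro ⟨i, rfl⟩
      exact i.isLt
  rw [himg, Finset.card_image_of_injective _ (Fin.castLE_injective h)]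
  simp

lemma csg_degree (n k : ℕ) (hkn : k ≤ n) (v : Fin n) :
    (completeSplitGraph n k).degree v = if v.val < k then n - 1 else k := by
  rw [← SimpleGraph.card_neighborFinset_eq_degree, SimpleGraph.neighborFinset_eq_filter]
  by_cases hv : v.val < k
  · rw [if_pos hv]
    have : (Finset.univ : Finset (Fin n)).filter (fun w => (completeSplitGraph n k).Adj v w)
        = Finset.univ.erase v := by
      ext w
      simp only [Finset.mem_filter, Finset.mem_univ, true_and, Finset.mem_erase, and_true]
      rw [csg_adj]
      constructor
      · rintro ⟨hne, -⟩; exact Ne.symm hne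
      · intro hne; exact ⟨Ne.symm hne, Or.inl hv⟩
    rw [this, Finset.card_erase_of_mem (Finset.mem_univ v), Finset.card_univ, Fintype.card_fin]
  · rw [if_neg hv]
    have : (Finset.univ : Finset (Fin n)).filter (fun w => (completeSplitGraph n k).Adj v w)
        = Finset.univ.filter (fun w => w.val < k) := by
      ext w
      simp only [Finset.mem_filter, Finset.mem_univ, true_and]
      rw [csg_adj]
      constructor
      · rintro ⟨hne, h | h⟩
        · exact absurd h hv
        · exact h
      · intro hw
        refine ⟨?_, Or.inr hw⟩
        intro heq
        rw [heq] at hv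
        exact hv hw
    rw [this, card_filter_lt n k hkn]

lemma csg_sum (p n k : ℕ) (hkn : k ≤ n) :
    ∑ v, (completeSplitGraph n k).degree v ^ p = k * (n-1)^p + (n-k) * k^p := by
  rw [← Finset.sum_filter_add_sum_filter_not Finset.univ (fun v : Fin n => v.val < k)]
  have h1 : ∀ v ∈ Finset.univ.filter (fun v : Fin n => v.val < k),
      (completeSplitGraph n k).degree v ^ p = (n-1)^p := by
    intro v hv
    rw [csg_degree n k hkn, if_pos (Finset.mem_filter.mp hv).2]
  have h2 : ∀ v ∈ Finset.univ.filter (fun v : Fin n => ¬ v.val < k),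
      (completeSplitGraph n k).degree v ^ p = k^p := by
    intro v hv
    rw [csg_degree n k hkn, if_neg (Finset.mem_filter.mp hv).2]
  rw [Finset.sum_congr rfl h1, Finset.sum_congr rfl h2, Finset.sum_const, Finset.sum_const,
    smul_eq_mul, smul_eq_mul, card_filter_lt n k hkn]
  congr 2
  have := Finset.card_filter_add_card_filter_not
    (s := (Finset.univ : Finset (Fin n))) (p := fun v : Fin n => v.val < k)
  rw [card_filter_lt n k hkn] at this
  simp only [Finset.card_univ, Fintype.card_fin] at this
  omega

lemma adj_of_deg {n : ℕ} (G : SimpleGraph (Fin n)) [DecidableRel G.Adj] (v : Fin n)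
    (h : G.degree v = n - 1) (w : Fin n) (hw : w ≠ v) : G.Adj v w := by
  have hsub : G.neighborFinset v ⊆ Finset.univ.erase v := by
    intro x hx
    have hadj := (SimpleGraph.mem_neighborFinset G v x).mp hx
    exact Finset.mem_erase.mpr ⟨(G.ne_of_adj hadj.symm), Finset.mem_univ x⟩
  have hcard : (Finset.univ.erase v).card ≤ (G.neighborFinset v).card := by
    rw [Finset.card_erase_of_mem (Finset.mem_univ v), Finset.card_univ, Fintype.card_fin,
      SimpleGraph.card_neighborFinset_eq_degree, h]
  have heq := Finset.eq_of_subset_of_card_le hsub hcard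
  have : w ∈ G.neighborFinset v := by
    rw [heq]
    exact Finset.mem_erase.mpr ⟨hw, Finset.mem_univ w⟩
  exact (SimpleGraph.mem_neighborFinset G v w).mp this

lemma iso_of_char {n k : ℕ} (hkn : k ≤ n) (G : SimpleGraph (Fin n)) (A : Finset (Fin n))
    (hA : A.card = k)
    (hchar : ∀ a b, G.Adj a b ↔ a ≠ b ∧ (a ∈ A ∨ b ∈ A)) :
    Nonempty (G ≃g completeSplitGraph n k) := by
  set S : Finset (Fin n) := Finset.univ.filter (fun v => v.val < k) with hSdef
  have hS : S.card = k := card_filter_lt n k hkn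
  have hAS : A.card = S.card := by rw [hA, hS]
  have hcompl : (Aᶜ : Finset (Fin n)).card = (Sᶜ : Finset (Fin n)).card := by
    rw [Finset.card_compl, Finset.card_compl, hAS]
  let e₁ : {x // x ∈ A} ≃ {x // x ∈ S} := Finset.equivOfCardEq hAS
  let e₂ : {x // ¬ x ∈ A} ≃ {x // ¬ x ∈ S} :=
    (Equiv.subtypeEquivRight (fun x => (Finset.mem_compl (s := A)).symm)).trans
      ((Finset.equivOfCardEq hcompl).trans
        (Equiv.subtypeEquivRight (fun x => (Finset.mem_compl (s := S)))))
  let σ : Fin n ≃ Fin n :=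
    (Equiv.sumCompl (· ∈ A)).symm.trans ((e₁.sumCongr e₂).trans (Equiv.sumCompl (· ∈ S)))
  have hσ : ∀ v, (σ v ∈ S ↔ v ∈ A) := by
    intro v
    by_cases hv : v ∈ A
    · simp only [σ, Equiv.trans_apply, Equiv.sumCompl_symm_apply_of_pos hv,
        Equiv.sumCongr_apply, Sum.map_inl, Equiv.sumCompl_apply_inl]
      exact iff_of_true (e₁ ⟨v, hv⟩).2 hv
    · simp only [σ, Equiv.trans_apply, Equiv.sumCompl_symm_apply_of_neg hv,
        Equiv.sumCongr_apply, Sum.map_inr, Equiv.sumCompl_apply_inr]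
      exact iff_of_false (e₂ ⟨v, hv⟩).2 hv
  have hσ' : ∀ v, ((σ v).val < k ↔ v ∈ A) := by
    intro v
    rw [← hσ v, hSdef, Finset.mem_filter]
    simp
  refine ⟨{ toEquiv := σ, map_rel_iff' := @fun a b => ?_ }⟩
  rw [csg_adj, hchar]
  constructor
  · rintro ⟨hne, h⟩
    refine ⟨fun heq => hne (by rw [heq]), ?_⟩
    rcases h with h | h
    · exact Or.inl ((hσ' a).mp h)
    · exact Or.inr ((hσ' b).mp h)
  · rintro ⟨hne, h⟩
    refine ⟨fun heq => hne (σ.injective heq), ?_⟩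
    rcases h with h | h
    · exact Or.inl ((hσ' a).mpr h)
    · exact Or.inr ((hσ' b).mpr h)

theorem degree_power_k_degenerate (p k n : ℕ) (hp : 1 < p) (hk : 1 ≤ k)
    (hn : k + 1 ≤ n) (G : SimpleGraph (Fin n)) [DecidableRel G.Adj]
    (hG : KDegenerate k G) :
    (∑ v : Fin n, G.degree v ^ p) ≤ k * (n - 1) ^ p + (n - k) * k ^ p ∧
      ((∑ v : Fin n, G.degree v ^ p) = k * (n - 1) ^ p + (n - k) * k ^ p ↔
        Nonempty (G ≃g completeSplitGraph n k)) := by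
  have hp2 : 2 ≤ p := hp
  obtain ⟨hle, heqd⟩ := main_ind p k hp2 hk n hn G hG
  refine ⟨hle, ?_, ?_⟩
  · intro h
    have hdegs := heqd h
    have hkn : k ≤ n := by omega
    by_cases hcase : n = k + 1
    · subst hcase
      apply iso_of_char hkn G (Finset.univ.filter (fun v => v.val < k)) (card_filter_lt _ k hkn)
      intro a b
      have hdeg : ∀ u : Fin (k+1), G.degree u = (k+1) - 1 := by
        intro u
        rcases hdegs u with h1 | h1
        · omega
        · exact h1
      constructor
      · intro hadj
        refine ⟨G.ne_of_adj hadj, ?_⟩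
        by_contra h2
        push_neg at h2
        obtain ⟨ha, hb⟩ := h2
        simp only [Finset.mem_filter, Finset.mem_univ, true_and, not_lt] at ha hb
        have h3 : a = b := by
          apply Fin.ext
          have := a.isLt
          have := b.isLt
          omega
        exact G.ne_of_adj hadj h3
      · rintro ⟨hne, -⟩
        exact adj_of_deg G a (hdeg a) b (Ne.symm hne)
    · have hlt : k + 1 < n := lt_of_le_of_ne hn (Ne.symm hcase)
      have hklt : k < n - 1 := by omega
      have hdeg_not : ∀ u, u ∉ Finset.univ.filter (fun v : Fin n => G.degree v = n-1) →
          G.degree u = k := by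
        intro u hu
        rcases hdegs u with h1 | h1
        · exact h1
        · exact absurd (Finset.mem_filter.mpr ⟨Finset.mem_univ u, h1⟩) hu
      have hAk : (Finset.univ.filter (fun v : Fin n => G.degree v = n-1)).card = k := by
        obtain ⟨a, ha⟩ : ∃ a,
            (Finset.univ.filter (fun v : Fin n => G.degree v = n-1)).card = a := ⟨_, rfl⟩
        have hcards := Finset.card_filter_add_card_filter_not
          (s := (Finset.univ : Finset (Fin n))) (p := fun v : Fin n => G.degree v = n-1)
        rw [ha] at hcards
        simp only [Finset.card_univ, Fintype.card_fin] at hcards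
        have hS : ∑ u, G.degree u ^ p = a*(n-1)^p + (n-a)*k^p := by
          rw [← Finset.sum_filter_add_sum_filter_not Finset.univ
            (fun v : Fin n => G.degree v = n-1) (fun v => G.degree v ^ p)]
          congr 1
          · rw [Finset.sum_congr rfl (fun u hu => by
              rw [(Finset.mem_filter.mp hu).2]), Finset.sum_const, smul_eq_mul, ha]
          · rw [Finset.sum_congr rfl (fun u hu => by
              rw [hdeg_not u (fun hmem => (Finset.mem_filter.mp hu).2
                (Finset.mem_filter.mp hmem).2)]), Finset.sum_const, smul_eq_mul]
            congr 1
            omega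
        have hXY : k^p < (n-1)^p := Nat.pow_lt_pow_left hklt (by omega)
        have hak : a = k := by
          apply count_eq (m := n) hXY (by omega) (by omega)
          rw [← hS, h]
        omega
      apply iso_of_char hkn G _ hAk
      intro a b
      constructor
      · intro hadj
        refine ⟨G.ne_of_adj hadj, ?_⟩
        by_contra h2
        push_neg at h2
        obtain ⟨ha, hb⟩ := h2
        have hdega : G.degree a = k := hdeg_not a ha
        have hdegb : G.degree b = k := hdeg_not b hb
        have hsub : (Finset.univ.filter (fun v : Fin n => G.degree v = n-1))
            ⊆ G.neighborFinset a := by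
          intro x hx
          have hxdeg := (Finset.mem_filter.mp hx).2
          have hxa : a ≠ x := by
            intro heq
            rw [heq] at hdega
            omega
          exact (SimpleGraph.mem_neighborFinset G a x).mpr
            ((adj_of_deg G x hxdeg a hxa).symm)
        have hcard : (G.neighborFinset a).card
            ≤ (Finset.univ.filter (fun v : Fin n => G.degree v = n-1)).card := by
          rw [SimpleGraph.card_neighborFinset_eq_degree, hdega, hAk]
        have heqAN := Finset.eq_of_subset_of_card_le hsub hcard
        have hbmem : b ∈ G.neighborFinset a :=
          (SimpleGraph.mem_neighborFinset G a b).mpr hadj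
        rw [← heqAN] at hbmem
        have := (Finset.mem_filter.mp hbmem).2
        omega
      · rintro ⟨hne, hab | hab⟩
        · exact adj_of_deg G a (Finset.mem_filter.mp hab).2 b (Ne.symm hne)
        · exact (adj_of_deg G b (Finset.mem_filter.mp hab).2 a hne).symm
  · rintro ⟨f⟩
    have hdeg : ∀ v, G.degree v = (completeSplitGraph n k).degree (f v) := by
      intro v
      rw [← SimpleGraph.card_neighborSet_eq_degree, ← SimpleGraph.card_neighborSet_eq_degree]
      exact Fintype.card_congr (f.mapNeighborSet v)
    calc ∑ v, G.degree v ^ p = ∑ v, (completeSplitGraph n k).degree (f v) ^ p :=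
          Finset.sum_congr rfl (fun v _ => by rw [hdeg v])
      _ = ∑ w, (completeSplitGraph n k).degree w ^ p :=
          Fintype.sum_equiv f.toEquiv _ _ (fun v => rfl)
      _ = _ := csg_sum p n k (by omega)
end
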